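/- Let P⃗⃗ be a finite collection of quadtiles of rank (1,0) with respect to {{2,3,4},{1}}, let j ∈ {1,2,3,4}, and let (a_{P_j})_{P⃗∈P⃗⃗} be complex numbers. Then size_j((a_{P_j})_{P⃗∈P⃗⃗}) is comparable, with absolute implicit constants, to sup_T |I_T|^{−1} ‖(Σ_{P⃗∈T} |a_{P_j}|² 1_{I_{P⃗}}/|I_{P⃗}|)^{1/2}‖_{L^{1,∞}(I_T)}, where T ranges over all trees in P⃗⃗ that are either single quadtiles or i-trees for some 2 ≤ i ≤ 4 such that j is a good index with respect to i, and ‖g‖_{L^{1,∞}(I_T)} := sup_{λ>0} λ·|{x ∈ I_T : |g(x)| > λ}|. -/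

import Mathlib

open MeasureTheory Set
open scoped ENNReal NNReal

noncomputable section

/-- A tile `P = I_P × ω_P` of area one: the time interval is the dyadic interval
`I_P = [2^k m, 2^k(m+1))`, and the frequency interval `ω_P` is the member
`2^{-k}(l + (0,1) + (−1)^{-k} σ)` of the shifted dyadic mesh `D_σ`, `σ ∈ {0,1/3,2/3}`. -/
structure Tile where
  k : ℤ
  m : ℤ
  l : ℤ
  σ : ℝ
  hσ : σ = 0 ∨ σ = 1/3 ∨ σ = 2/3

noncomputable instance : DecidableEq Tile := Classical.decEq _

namespace Tile

/-- The length `|I_P| = 2^k` of the time interval. -/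
def len (P : Tile) : ℝ := (2:ℝ) ^ P.k

/-- The time interval `I_P = [2^k m, 2^k(m+1))`. -/
def I (P : Tile) : Set ℝ := Set.Ico ((2:ℝ)^P.k * P.m) ((2:ℝ)^P.k * (P.m + 1))

/-- Left endpoint of the frequency interval `ω_P`. -/
def ωa (P : Tile) : ℝ := (2:ℝ)^(-P.k) * ((P.l : ℝ) + (-1:ℝ)^(-P.k) * P.σ)

/-- Right endpoint of the frequency interval `ω_P`. -/
def ωb (P : Tile) : ℝ := (2:ℝ)^(-P.k) * ((P.l : ℝ) + 1 + (-1:ℝ)^(-P.k) * P.σ)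

/-- The frequency interval `ω_P`, of length `2^{-k}`. -/
def ω (P : Tile) : Set ℝ := Set.Ioo P.ωa P.ωb

/-- `c ω_P`: the interval with the same center as `ω_P` but `c` times the length. -/
def dilω (P : Tile) (c : ℝ) : Set ℝ :=
  Set.Ioo ((P.ωa + P.ωb)/2 - c * (P.ωb - P.ωa)/2) ((P.ωa + P.ωb)/2 + c * (P.ωb - P.ωa)/2)

/-- `P' < P` iff `I_{P'} ⊊ I_P` and `5ω_P ⊆ 5ω_{P'}`. -/
def Lt (P' P : Tile) : Prop := P'.I ⊂ P.I ∧ P.dilω 5 ⊆ P'.dilω 5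

/-- `P' ≤ P` iff `P' < P` or `P' = P`. -/
def Le (P' P : Tile) : Prop := Lt P' P ∨ P' = P

/-- `P' ≲ P` iff `I_{P'} ⊆ I_P` and `10⁷ω_P ⊆ 10⁷ω_{P'}`. -/
def Les (P' P : Tile) : Prop := P'.I ⊆ P.I ∧ P.dilω (10^7) ⊆ P'.dilω (10^7)

/-- `P' ≲' P` iff `P' ≲ P` and not `P' ≤ P`. -/
def Lesp (P' P : Tile) : Prop := Les P' P ∧ ¬ Le P' P

/-- The center of the shifted time interval `I_P^n = I_P + n|I_P|`. -/
def shiftCenter (P : Tile) (n : ℤ) : ℝ :=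
  (2:ℝ)^P.k * P.m + (2:ℝ)^P.k / 2 + n * (2:ℝ)^P.k

end Tile

/-- A quadtile: four tiles with a common time interval. Index `0` is the paraproduct
tile (position `1` in the paper), indices `1,2,3` are positions `2,3,4`. -/
structure Quadtile where
  P : Fin 4 → Tile
  hk : ∀ i j, (P i).k = (P j).k
  hm : ∀ i j, (P i).m = (P j).m

noncomputable instance : DecidableEq Quadtile := Classical.decEq _

namespace Quadtile

/-- The common time interval `I_{P⃗}`. -/
def I (Q : Quadtile) : Set ℝ := (Q.P 0).I

/-- The common length `|I_{P⃗}|`. -/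
def len (Q : Quadtile) : ℝ := (Q.P 0).len

/-- The side length of the frequency cube `Q_{P⃗}`. -/
def freqSide (Q : Quadtile) : ℝ := (2:ℝ)^(-(Q.P 0).k)

/-- The frequency cube dilated by `10⁹` (as a subset of `ℝ⁴`). -/
def freqCube10 (Q : Quadtile) : Set (Fin 4 → ℝ) :=
  {ξ | ∀ i, ξ i ∈ (Q.P i).dilω (10^9)}

end Quadtile

/-- `P' ≲' P` at index `i`: for the paraproduct index `0` (position `1`) this means the
frequency intervals are disjoint; at the other indices it is `Tile.Lesp`. -/
def Lesp' (i : Fin 4) (P' P : Tile) : Prop :=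
  if i = 0 then P'.ω ∩ P.ω = ∅ else Tile.Lesp P' P

/-- A collection of quadtiles is sparse: all quadtiles have the same shift and the
frequency cubes form a sparse collection. -/
def Sparse (PP : Finset Quadtile) : Prop :=
  (∀ Q ∈ PP, ∀ Q' ∈ PP, ∀ i : Fin 4, (Q.P i).σ = (Q'.P i).σ) ∧
  (∀ Q ∈ PP, ∀ Q' ∈ PP, (∃ i : Fin 4, (Q.P i).ω ≠ (Q'.P i).ω) →
    (Q.freqSide < Q'.freqSide → 10^9 * Q.freqSide < Q'.freqSide) ∧
    (Q.freqSide = Q'.freqSide → Q.freqCube10 ∩ Q'.freqCube10 = ∅))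

/-- Rank `(1,0)` with respect to `{{2,3,4},{1}}` (indices `{1,2,3}` and `{0}` here). -/
def Rank10 (PP : Finset Quadtile) : Prop :=
  ∀ Q ∈ PP, ∀ Q' ∈ PP,
    (Q ≠ Q' → ∀ j : Fin 4, j ≠ 0 → Q.P j ≠ Q'.P j) ∧
    (Q.I = Q'.I → Q.P 0 = Q'.P 0) ∧
    (∀ j : Fin 4, j ≠ 0 → Tile.Le (Q'.P j) (Q.P j) →
      (∀ i : Fin 4, Tile.Les (Q'.P i) (Q.P i)) ∧
      (10^9 * Q'.len < Q.len →
        ∃ τ₁ τ₂ : Fin 4, τ₁ ≠ τ₂ ∧ τ₁ ≠ j ∧ τ₂ ≠ j ∧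
          Lesp' τ₁ (Q'.P τ₁) (Q.P τ₁) ∧ Lesp' τ₂ (Q'.P τ₂) (Q.P τ₂)))

/-- `j` is a good index with respect to `i` (in the collection `PP`): whenever
`P'_i ≤ P_i` and `10⁹|I_{P⃗'}| < |I_{P⃗}|`, one has `P'_j ≲' P_j`. -/
def GoodIndex (PP : Finset Quadtile) (i j : Fin 4) : Prop :=
  ∀ Q ∈ PP, ∀ Q' ∈ PP, Tile.Le (Q'.P i) (Q.P i) → 10^9 * Q'.len < Q.len →
    Lesp' j (Q'.P j) (Q.P j)

/-- An `i`-tree (`i ∈ {1,2,3}`, i.e. positions `2,3,4`) with top quadtile `top`: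
`P_i ≤ P_{T,i}` for every quadtile in the tree. The top need not belong to the tree. -/
structure TTree where
  i : Fin 4
  hi : i ≠ 0
  top : Quadtile
  carrier : Finset Quadtile
  hle : ∀ Q ∈ carrier, Tile.Le (Q.P i) (top.P i)

/-- The collection of values whose supremum is the size: over single-quadtile trees and
over `i`-trees (within `S`) such that `j` is a good index with respect to `i`. -/
def sizeSet (amb S : Finset Quadtile) (a : Quadtile → ℂ) (j : Fin 4) : Set ℝ :=
  {r | (∃ Q ∈ S, r = (Q.len⁻¹ * ‖a Q‖^2) ^ ((1:ℝ)/2)) ∨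
       (∃ T : TTree, ↑T.carrier ⊆ (S : Set Quadtile) ∧ T.i ≠ j ∧ GoodIndex amb T.i j ∧
          r = (T.top.len⁻¹ * ∑ Q ∈ T.carrier, ‖a Q‖^2) ^ ((1:ℝ)/2))}

/-- `size_j((a_{P_j})_{P⃗ ∈ S})`, with good indices taken with respect to the ambient
collection `amb`. -/
def size (amb S : Finset Quadtile) (a : Quadtile → ℂ) (j : Fin 4) : ℝ :=
  sSup (sizeSet amb S a j)

/-- Trees `T, T'` are strongly `j`-disjoint. -/
def StronglyDisjoint (j : Fin 4) (T T' : TTree) : Prop :=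
  (∀ Q ∈ T.carrier, ∀ Q' ∈ T'.carrier, Q.P j ≠ Q'.P j) ∧
  (∀ Q ∈ T.carrier, ∀ Q' ∈ T'.carrier,
    ((Q.P j).dilω 2 ∩ (Q'.P j).dilω 2).Nonempty →
      Q'.I ∩ T.top.I = ∅ ∧ Q.I ∩ T'.top.I = ∅)

/-- The collection of values whose supremum is the energy. -/
def energySet (S : Finset Quadtile) (a : Quadtile → ℂ) (j : Fin 4) : Set ℝ :=
  {r | ∃ (n : ℤ) (TT : Finset TTree),
        (∀ T ∈ TT, ↑T.carrier ⊆ (S : Set Quadtile)) ∧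
        (∀ T ∈ TT, ∀ T' ∈ TT, T ≠ T' → StronglyDisjoint j T T') ∧
        (∀ T ∈ TT, (2:ℝ)^n * T.top.len ^ ((1:ℝ)/2) ≤
          (∑ Q ∈ T.carrier, ‖a Q‖^2) ^ ((1:ℝ)/2)) ∧
        (∀ T ∈ TT, ∀ T' : TTree, T'.carrier ⊆ T.carrier →
          (∑ Q ∈ T'.carrier, ‖a Q‖^2) ^ ((1:ℝ)/2) ≤
            (2:ℝ)^(n+1) * T'.top.len ^ ((1:ℝ)/2)) ∧
        r = (2:ℝ)^n * (∑ T ∈ TT, T.top.len) ^ ((1:ℝ)/2)}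

/-- `energy_j((a_{P_j})_{P⃗ ∈ S})`. -/
def energy (S : Finset Quadtile) (a : Quadtile → ℂ) (j : Fin 4) : ℝ :=
  sSup (energySet S a j)

/-- The approximate cutoff `χ̃_I(x) = (1 + ((x − x_I)/|I|)²)^{−1/2}` for an interval with
center `c` and length `l`. -/
def chiTilde (c l x : ℝ) : ℝ := (1 + ((x - c) / l) ^ 2) ^ (-(1/2) : ℝ)

/-- `φ` is an `L²`-normalized wave packet on the shifted tile `P^n`, with constant
profile `Cw : ℝ → ℝ`: its Fourier transform is supported in `(9/10)ω_P` and it decays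
like any power of `χ̃_{I_P^n}`. -/
def IsWavePacket (Cw : ℝ → ℝ) (P : Tile) (n : ℤ) (φ : ℝ → ℂ) : Prop :=
  Function.support (VectorFourier.fourierIntegral Real.fourierChar volume (innerₗ ℝ) φ) ⊆ P.dilω (9/10) ∧
  ∀ M : ℝ, 0 < M → ∀ x : ℝ,
    ‖φ x‖ ≤ Cw M * P.len ^ (-(1:ℝ)/2) * (chiTilde (P.shiftCenter n) P.len x) ^ M

/-- The (bilinear, unconjugated) pairing `⟨f, g⟩ = ∫ f g`. -/
def pair (f g : ℝ → ℂ) : ℂ := ∫ x : ℝ, f x * g x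

/-- The quadrilinear form
`Λ_{P⃗⃗}(f₁,f₂,f₃,f₄) = Σ_{P⃗} |I_{P⃗}|⁻¹ ∏_j ⟨f_j, φ_{P_j^{n_j},j}⟩`. -/
def Λform (PP : Finset Quadtile) (φ : Quadtile → Fin 4 → ℝ → ℂ)
    (f : Fin 4 → ℝ → ℂ) : ℂ :=
  ∑ Q ∈ PP, (Q.len⁻¹ : ℂ) * ∏ j : Fin 4, pair (f j) (φ Q j)

end

noncomputable section

/-- The `L^{1,∞}` quasinorm on a set `S`: `sup_{λ>0} λ |{x ∈ S : |g x| > λ}|`. -/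
def weakNormOn (S : Set ℝ) (g : ℝ → ℝ) : ℝ :=
  sSup {r | ∃ lam : ℝ, 0 < lam ∧
    r = lam * (MeasureTheory.volume {x ∈ S | lam < |g x|}).toReal}

/-- The collection of values `|I_T|⁻¹ ‖(Σ_{P⃗∈T} |a_{P_j}|² 1_{I_{P⃗}}/|I_{P⃗}|)^{1/2}‖_{L^{1,∞}(I_T)}`,
over trees `T` that are single quadtiles or `i`-trees such that `j` is good w.r.t. `i`. -/
def jnSet (PP : Finset Quadtile) (a : Quadtile → ℂ) (j : Fin 4) : Set ℝ :=
  {r | (∃ Q ∈ PP, r = Q.len⁻¹ * weakNormOn Q.I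
          (fun x => (‖a Q‖^2 * Set.indicator Q.I (1 : ℝ → ℝ) x / Q.len) ^ ((1:ℝ)/2))) ∨
       (∃ T : TTree, ↑T.carrier ⊆ (PP : Set Quadtile) ∧ T.i ≠ j ∧ GoodIndex PP T.i j ∧
          r = T.top.len⁻¹ * weakNormOn T.top.I
            (fun x => (∑ Q ∈ T.carrier,
              ‖a Q‖^2 * Set.indicator Q.I (1 : ℝ → ℝ) x / Q.len) ^ ((1:ℝ)/2)))}

namespace JN8

open MeasureTheory Set

noncomputable section

/-! ### Basic tile lemmas -/

lemma two_zpow_pos (k : ℤ) : (0:ℝ) < 2 ^ k := by positivity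

lemma tile_len_pos (P : Tile) : 0 < P.len := two_zpow_pos _

/-- generic dyadic interval -/
def Dy (k m : ℤ) : Set ℝ := Set.Ico ((2:ℝ)^k * m) ((2:ℝ)^k * (m+1))

lemma tile_I_eq (P : Tile) : P.I = Dy P.k P.m := rfl

lemma dy_meas (k m : ℤ) : MeasurableSet (Dy k m) := measurableSet_Ico

lemma tile_I_meas (P : Tile) : MeasurableSet P.I := measurableSet_Ico

lemma dy_lt (k m : ℤ) : (2:ℝ)^k * m < (2:ℝ)^k * (m+1) := by
  nlinarith [two_zpow_pos k]

lemma dy_nonempty (k m : ℤ) : (Dy k m).Nonempty :=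
  ⟨(2:ℝ)^k * m, le_refl _, dy_lt k m⟩

lemma vol_dy (k m : ℤ) : volume (Dy k m) = ENNReal.ofReal ((2:ℝ)^k) := by
  rw [Dy, Real.volume_Ico]; congr 1; ring

lemma vol_tile_I (P : Tile) : volume P.I = ENNReal.ofReal P.len := vol_dy _ _

lemma vol_tile_I_toReal (P : Tile) : (volume P.I).toReal = P.len := by
  rw [vol_tile_I, ENNReal.toReal_ofReal (tile_len_pos P).le]

lemma vol_tile_I_ne_top (P : Tile) : volume P.I ≠ ⊤ := by
  rw [vol_tile_I]; exact ENNReal.ofReal_ne_top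

lemma ωb_sub_ωa (P : Tile) : P.ωb - P.ωa = (2:ℝ)^(-P.k) := by
  unfold Tile.ωa Tile.ωb; ring

/-- center of the frequency interval -/
def ctr (P : Tile) : ℝ := (P.ωa + P.ωb)/2

lemma dil_eq (P : Tile) (c : ℝ) :
    P.dilω c = Set.Ioo (ctr P - c * (2:ℝ)^(-P.k)/2) (ctr P + c * (2:ℝ)^(-P.k)/2) := by
  unfold Tile.dilω ctr; rw [ωb_sub_ωa]

lemma ctr_mem_dil5 (P : Tile) : ctr P ∈ P.dilω 5 := by
  rw [dil_eq]
  have := two_zpow_pos (-P.k)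
  constructor <;> nlinarith

/-! ### Quadtile lemmas -/

lemma qI (Q : Quadtile) (i : Fin 4) : (Q.P i).I = Q.I := by
  show (Q.P i).I = (Q.P 0).I
  unfold Tile.I
  rw [Q.hk i 0, Q.hm i 0]

lemma qlen (Q : Quadtile) (i : Fin 4) : (Q.P i).len = Q.len := by
  show (Q.P i).len = (Q.P 0).len
  unfold Tile.len; rw [Q.hk i 0]

lemma qlen_pos (Q : Quadtile) : 0 < Q.len := tile_len_pos _

lemma qI_eq_dy (Q : Quadtile) : Q.I = Dy (Q.P 0).k (Q.P 0).m := rfl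

lemma vol_qI (Q : Quadtile) : volume Q.I = ENNReal.ofReal Q.len := vol_tile_I _

lemma vol_qI_toReal (Q : Quadtile) : (volume Q.I).toReal = Q.len := vol_tile_I_toReal _

lemma qI_meas (Q : Quadtile) : MeasurableSet Q.I := measurableSet_Ico

lemma qI_nonempty (Q : Quadtile) : Q.I.Nonempty := dy_nonempty _ _

lemma tile_le_I (h : Tile.Le P' P) : P'.I ⊆ P.I := by
  rcases h with h | rfl
  · exact h.1.subset
  · exact subset_rfl

/-! ### Dyadic interval combinatorics -/

lemma dy_sub {k m k' m' : ℤ} (hk : k' ≤ k) (hne : (Dy k' m' ∩ Dy k m).Nonempty) :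
    Dy k' m' ⊆ Dy k m := by
  obtain ⟨x, hx', hx⟩ := hne
  set d := (k - k').toNat with hd
  have hkk : k = k' + (d:ℤ) := by simp [hd]; omega
  set N : ℤ := 2 ^ d with hN
  have hNR : (2:ℝ)^k = 2^k' * (N:ℝ) := by
    rw [hkk, zpow_add₀ (by norm_num : (2:ℝ) ≠ 0)]
    congr 1
    rw [hN]; push_cast; rw [zpow_natCast]
  have hpos := two_zpow_pos k'
  obtain ⟨ha, hb⟩ := hx
  obtain ⟨ha', hb'⟩ := hx'
  rw [hNR] at ha hb
  -- real strict inequalities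
  have h1 : (N:ℝ) * m < m' + 1 := by
    have : (2:ℝ)^k' * ((N:ℝ) * m) ≤ x := by rw [← mul_assoc]; exact ha
    nlinarith
  have h2 : (m':ℝ) < (N:ℝ) * (m+1) := by
    have : x < (2:ℝ)^k' * ((N:ℝ) * (m+1)) := by rw [← mul_assoc]; exact hb
    nlinarith
  -- integer inequalities
  have h1' : N * m ≤ m' := by
    have : N * m < m' + 1 := by exact_mod_cast h1
    omega
  have h2' : m' + 1 ≤ N * (m+1) := by
    have : m' < N * (m+1) := by exact_mod_cast h2
    omega
  intro y hy
  obtain ⟨hy1, hy2⟩ := hy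
  constructor
  · rw [hNR, mul_assoc]
    have : (2:ℝ)^k' * ((N:ℝ)*m) ≤ 2^k' * m' := by
      have : ((N*m : ℤ):ℝ) ≤ (m' : ℝ) := by exact_mod_cast h1'
      push_cast at this
      nlinarith
    linarith
  · rw [hNR, mul_assoc]
    have : (2:ℝ)^k' * (m'+1) ≤ 2^k' * ((N:ℝ)*(m+1)) := by
      have : ((m' + 1 : ℤ):ℝ) ≤ ((N*(m+1) : ℤ) : ℝ) := by exact_mod_cast h2'
      push_cast at this
      nlinarith
    linarith

lemma dy_endpoints {k m k' m' : ℤ} (h : Dy k' m' ⊆ Dy k m) :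
    (2:ℝ)^k * m ≤ 2^k' * m' ∧ (2:ℝ)^k' * (m'+1) ≤ 2^k * (m+1) := by
  rw [Dy, Dy, Set.Ico_subset_Ico_iff (dy_lt k' m')] at h
  exact h

lemma dy_len_le {k m k' m' : ℤ} (h : Dy k' m' ⊆ Dy k m) : (2:ℝ)^k' ≤ 2^k := by
  obtain ⟨h1, h2⟩ := dy_endpoints h
  nlinarith

lemma dy_k_le {k m k' m' : ℤ} (h : Dy k' m' ⊆ Dy k m) : k' ≤ k := by
  have := dy_len_le h
  exact_mod_cast (zpow_le_zpow_iff_right₀ (by norm_num : (1:ℝ) < 2)).mp this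

lemma dy_eq_of_sub_len {k m k' m' : ℤ} (h : Dy k' m' ⊆ Dy k m)
    (hlen : (2:ℝ)^k ≤ 2^k') : Dy k' m' = Dy k m := by
  obtain ⟨h1, h2⟩ := dy_endpoints h
  have hk : (2:ℝ)^k = 2^k' := le_antisymm hlen (dy_len_le h)
  have e1 : (2:ℝ)^k * m = 2^k' * m' := by nlinarith
  have e2 : (2:ℝ)^k' * (m'+1) = 2^k * (m+1) := by nlinarith
  rw [Dy, Dy, e1, ← e2]

lemma dy_inj {k m k' m' : ℤ} (h : Dy k' m' = Dy k m) : k' = k ∧ m' = m := by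
  have h1 := dy_k_le h.subset
  have h2 := dy_k_le h.superset
  have hk : k' = k := le_antisymm h1 h2
  subst hk
  obtain ⟨e1, e2⟩ := dy_endpoints h.subset
  have hpos := two_zpow_pos k'
  have : (m:ℝ) = m' := by nlinarith
  have : m = m' := by exact_mod_cast this
  exact ⟨rfl, this.symm⟩

lemma dy_k_lt_of_ssub {k m k' m' : ℤ} (h : Dy k' m' ⊂ Dy k m) : k' < k := by
  have hle := dy_k_le h.subset
  rcases lt_or_eq_of_le hle with h' | h'
  · exact h'
  · exfalso
    subst h'
    exact h.ne (dy_eq_of_sub_len h.subset (le_refl _))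

lemma dy_comp {k m k' m' : ℤ} (hne : (Dy k' m' ∩ Dy k m).Nonempty) :
    Dy k' m' ⊆ Dy k m ∨ Dy k m ⊆ Dy k' m' := by
  rcases le_total k' k with h | h
  · exact Or.inl (dy_sub h hne)
  · exact Or.inr (dy_sub h (by rwa [Set.inter_comm] at hne))

end
end JN8


namespace JN8

open MeasureTheory Set

noncomputable section

variable (a : Quadtile → ℂ)

/-! ### The square function and its properties -/

def gfun (B : Finset Quadtile) (x : ℝ) : ℝ :=
  ∑ Q ∈ B, ‖a Q‖^2 * Set.indicator Q.I (1 : ℝ → ℝ) x / Q.len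

def hfun (B : Finset Quadtile) (x : ℝ) : ℝ := (gfun a B x) ^ ((1:ℝ)/2)

def Gfun (B : Finset Quadtile) (x : ℝ) : ℝ≥0∞ :=
  ∑ Q ∈ B, ENNReal.ofReal (‖a Q‖^2 / Q.len) * Set.indicator Q.I (fun _ => (1:ℝ≥0∞)) x

lemma term_nonneg (Q : Quadtile) (x : ℝ) :
    0 ≤ ‖a Q‖^2 * Set.indicator Q.I (1 : ℝ → ℝ) x / Q.len := by
  have h1 : (0:ℝ) ≤ Set.indicator Q.I (1 : ℝ → ℝ) x :=
    Set.indicator_nonneg (fun _ _ => zero_le_one) x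
  have := (qlen_pos Q)
  positivity

lemma gfun_nonneg (B : Finset Quadtile) (x : ℝ) : 0 ≤ gfun a B x :=
  Finset.sum_nonneg fun Q _ => term_nonneg a Q x

lemma hfun_nonneg (B : Finset Quadtile) (x : ℝ) : 0 ≤ hfun a B x :=
  Real.rpow_nonneg (gfun_nonneg a B x) _

lemma hfun_sq (B : Finset Quadtile) (x : ℝ) : (hfun a B x)^2 = gfun a B x := by
  rw [hfun, ← Real.rpow_natCast (gfun a B x ^ ((1:ℝ)/2)) 2,
    ← Real.rpow_mul (gfun_nonneg a B x)]
  norm_num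

lemma gfun_meas (B : Finset Quadtile) : Measurable (gfun a B) := by
  apply Finset.measurable_sum
  intro Q _
  exact ((Measurable.indicator measurable_const (qI_meas Q)).const_mul _).div_const _

lemma hfun_meas (B : Finset Quadtile) : Measurable (hfun a B) :=
  (Real.continuous_rpow_const (by norm_num : (0:ℝ) ≤ 1/2)).measurable.comp (gfun_meas a B)

lemma Gfun_meas (B : Finset Quadtile) : Measurable (Gfun a B) := by
  apply Finset.measurable_sum
  intro Q _
  exact (Measurable.indicator measurable_const (qI_meas Q)).const_mul _

lemma Gfun_eq (B : Finset Quadtile) (x : ℝ) :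
    Gfun a B x = ENNReal.ofReal (gfun a B x) := by
  rw [gfun, ENNReal.ofReal_sum_of_nonneg (fun Q _ => term_nonneg a Q x)]
  apply Finset.sum_congr rfl
  intro Q _
  by_cases hx : x ∈ Q.I
  · simp only [Set.indicator_of_mem hx, Pi.one_apply, mul_one]
  · simp [Set.indicator_of_notMem hx]

lemma lint_G (B : Finset Quadtile) (A : Set ℝ) :
    ∫⁻ x in A, Gfun a B x ∂volume
      = ∑ Q ∈ B, ENNReal.ofReal (‖a Q‖^2 / Q.len) * volume (Q.I ∩ A) := by
  unfold Gfun
  rw [lintegral_finset_sum _ (fun Q _ =>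
    (Measurable.indicator measurable_const (qI_meas Q)).const_mul _)]
  apply Finset.sum_congr rfl
  intro Q _
  rw [lintegral_const_mul _ (Measurable.indicator measurable_const (qI_meas Q))]
  congr 1
  rw [lintegral_indicator (qI_meas Q), setLIntegral_one,
    Measure.restrict_apply (qI_meas Q)]

lemma lint_G_univ (B : Finset Quadtile) :
    ∫⁻ x, Gfun a B x ∂volume = ENNReal.ofReal (∑ Q ∈ B, ‖a Q‖^2) := by
  have := lint_G a B Set.univ
  rw [Measure.restrict_univ] at this
  rw [this, ENNReal.ofReal_sum_of_nonneg (fun Q _ => by positivity)]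
  apply Finset.sum_congr rfl
  intro Q _
  rw [Set.inter_univ, vol_qI,
    ← ENNReal.ofReal_mul (div_nonneg (by positivity) (qlen_pos Q).le)]
  congr 1
  field_simp [(qlen_pos Q).ne']

lemma markov (B : Finset Quadtile) (lam : ℝ) (hlam : 0 < lam) (S : Set ℝ) :
    ENNReal.ofReal (lam^2) * volume {x ∈ S | lam < |hfun a B x|}
      ≤ ENNReal.ofReal (∑ Q ∈ B, ‖a Q‖^2) := by
  have hsub : {x ∈ S | lam < |hfun a B x|} ⊆ {x | ENNReal.ofReal (lam^2) ≤ Gfun a B x} := by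
    intro x hx
    obtain ⟨-, hx2⟩ := hx
    rw [abs_of_nonneg (hfun_nonneg a B x)] at hx2
    have h2 : lam^2 < (hfun a B x)^2 := by
      nlinarith [hfun_nonneg a B x]
    rw [hfun_sq] at h2
    rw [Set.mem_setOf_eq, Gfun_eq]
    exact ENNReal.ofReal_le_ofReal h2.le
  calc ENNReal.ofReal (lam^2) * volume {x ∈ S | lam < |hfun a B x|}
      ≤ ENNReal.ofReal (lam^2) * volume {x | ENNReal.ofReal (lam^2) ≤ Gfun a B x} := by
        exact mul_le_mul_right (measure_mono hsub) _
    _ ≤ ∫⁻ x, Gfun a B x ∂volume :=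
        mul_meas_ge_le_lintegral₀ (Gfun_meas a B).aemeasurable _
    _ = ENNReal.ofReal (∑ Q ∈ B, ‖a Q‖^2) := lint_G_univ a B

lemma wk_elem_le (B : Finset Quadtile) {S : Set ℝ} (hS : volume S ≠ ⊤)
    {lam : ℝ} (hlam : 0 < lam) :
    lam * (volume {x ∈ S | lam < |hfun a B x|}).toReal
      ≤ Real.sqrt ((∑ Q ∈ B, ‖a Q‖^2) * (volume S).toReal) := by
  set A := {x ∈ S | lam < |hfun a B x|} with hA
  have hAS : A ⊆ S := fun x hx => hx.1
  have hvA : volume A ≤ volume S := measure_mono hAS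
  have hvAne : volume A ≠ ⊤ := fun h => hS (top_le_iff.mp (h ▸ hvA))
  have hM : lam^2 * (volume A).toReal ≤ ∑ Q ∈ B, ‖a Q‖^2 := by
    have := markov a B lam hlam S
    have h2 : (ENNReal.ofReal (lam^2) * volume A).toReal
        ≤ (ENNReal.ofReal (∑ Q ∈ B, ‖a Q‖^2)).toReal :=
      ENNReal.toReal_mono ENNReal.ofReal_ne_top this
    rw [ENNReal.toReal_mul, ENNReal.toReal_ofReal (sq_nonneg lam),
      ENNReal.toReal_ofReal (Finset.sum_nonneg fun Q _ => by positivity)] at h2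
    exact h2
  have htA : (volume A).toReal ≤ (volume S).toReal := ENNReal.toReal_mono hS hvA
  have h0A : 0 ≤ (volume A).toReal := ENNReal.toReal_nonneg
  apply (Real.le_sqrt (by positivity)
    (mul_nonneg (Finset.sum_nonneg fun Q _ => by positivity) ENNReal.toReal_nonneg)).mpr
  calc (lam * (volume A).toReal)^2 = (lam^2 * (volume A).toReal) * (volume A).toReal := by ring
    _ ≤ (∑ Q ∈ B, ‖a Q‖^2) * (volume S).toReal := by
        apply mul_le_mul hM htA h0A (Finset.sum_nonneg fun Q _ => by positivity)

lemma wk_bdd (B : Finset Quadtile) {S : Set ℝ} (hS : volume S ≠ ⊤) :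
    BddAbove {r | ∃ lam : ℝ, 0 < lam ∧
      r = lam * (volume {x ∈ S | lam < |hfun a B x|}).toReal} := by
  refine ⟨Real.sqrt ((∑ Q ∈ B, ‖a Q‖^2) * (volume S).toReal), ?_⟩
  rintro r ⟨lam, hlam, rfl⟩
  exact wk_elem_le a B hS hlam

lemma wk_le (B : Finset Quadtile) {S : Set ℝ} (hS : volume S ≠ ⊤) :
    weakNormOn S (hfun a B) ≤ Real.sqrt ((∑ Q ∈ B, ‖a Q‖^2) * (volume S).toReal) := by
  apply Real.sSup_le
  · rintro r ⟨lam, hlam, rfl⟩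
    exact wk_elem_le a B hS hlam
  · exact Real.sqrt_nonneg _

lemma wk_ge (B : Finset Quadtile) {S : Set ℝ} (hS : volume S ≠ ⊤)
    {lam : ℝ} (hlam : 0 < lam) :
    lam * (volume {x ∈ S | lam < |hfun a B x|}).toReal ≤ weakNormOn S (hfun a B) :=
  le_csSup (wk_bdd a B hS) ⟨lam, hlam, rfl⟩

lemma wk_nonneg (S : Set ℝ) (g : ℝ → ℝ) : 0 ≤ weakNormOn S g := by
  apply Real.sSup_nonneg
  rintro r ⟨lam, hlam, rfl⟩
  positivity

end
end JN8


namespace JN8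

open MeasureTheory Set

noncomputable section

variable (PP : Finset Quadtile) (a : Quadtile → ℂ) (j : Fin 4)

def trivTile : Tile := ⟨0, 0, 0, 0, Or.inl rfl⟩

def quadOf (t : Tile) : Quadtile := ⟨fun _ => t, fun _ _ => rfl, fun _ _ => rfl⟩

lemma quadOf_P (t : Tile) (i : Fin 4) : (quadOf t).P i = t := rfl
lemma quadOf_len (t : Tile) : (quadOf t).len = t.len := rfl
lemma quadOf_I (t : Tile) : (quadOf t).I = t.I := rfl

lemma pick_i (j : Fin 4) : ∃ i : Fin 4, i ≠ 0 ∧ i ≠ j := by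
  fin_cases j
  · exact ⟨1, by decide, by decide⟩
  · exact ⟨2, by decide, by decide⟩
  · exact ⟨1, by decide, by decide⟩
  · exact ⟨1, by decide, by decide⟩

lemma single_fun_eq (Q : Quadtile) :
    (fun x => (‖a Q‖^2 * Set.indicator Q.I (1 : ℝ → ℝ) x / Q.len) ^ ((1:ℝ)/2))
      = hfun a {Q} := by
  funext x
  unfold hfun gfun
  rw [Finset.sum_singleton]

lemma tree_fun_eq (B : Finset Quadtile) :
    (fun x => (∑ Q ∈ B,
        ‖a Q‖^2 * Set.indicator Q.I (1 : ℝ → ℝ) x / Q.len) ^ ((1:ℝ)/2))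
      = hfun a B := rfl

lemma jn_single_mem {Q : Quadtile} (hQ : Q ∈ PP) :
    Q.len⁻¹ * weakNormOn Q.I (hfun a {Q}) ∈ jnSet PP a j :=
  Or.inl ⟨Q, hQ, by rw [single_fun_eq]⟩

lemma jn_tree_mem {T : TTree} (h1 : ↑T.carrier ⊆ (PP : Set Quadtile)) (h2 : T.i ≠ j)
    (h3 : GoodIndex PP T.i j) :
    T.top.len⁻¹ * weakNormOn T.top.I (hfun a T.carrier) ∈ jnSet PP a j :=
  Or.inr ⟨T, h1, h2, h3, by rw [tree_fun_eq]⟩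

lemma quad_I_sub_len {Q R : Quadtile} (h : Q.I ⊆ R.I) : Q.len ≤ R.len :=
  dy_len_le (by rw [← qI_eq_dy, ← qI_eq_dy]; exact h)

lemma carrier_I_sub (T : TTree) {Q : Quadtile} (hQ : Q ∈ T.carrier) :
    Q.I ⊆ T.top.I := by
  have := tile_le_I (T.hle Q hQ)
  rwa [qI, qI] at this

/-- total mass bound -/
def M2 : ℝ := ∑ Q ∈ PP, Q.len⁻¹ * ‖a Q‖^2

lemma M2_nonneg : 0 ≤ M2 PP a := by
  apply Finset.sum_nonneg
  intro Q _
  have := qlen_pos Q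
  positivity

lemma tree_mass_le {T : TTree} (h1 : ↑T.carrier ⊆ (PP : Set Quadtile)) :
    T.top.len⁻¹ * ∑ Q ∈ T.carrier, ‖a Q‖^2 ≤ M2 PP a := by
  rw [Finset.mul_sum]
  calc ∑ Q ∈ T.carrier, T.top.len⁻¹ * ‖a Q‖^2
      ≤ ∑ Q ∈ T.carrier, Q.len⁻¹ * ‖a Q‖^2 := by
        apply Finset.sum_le_sum
        intro Q hQ
        have hlen : Q.len ≤ T.top.len := quad_I_sub_len (carrier_I_sub T hQ)
        have h1 : (0:ℝ) < Q.len := qlen_pos Q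
        have : T.top.len⁻¹ ≤ Q.len⁻¹ := by
          apply inv_anti₀ h1 hlen
        nlinarith [sq_nonneg ‖a Q‖]
    _ ≤ M2 PP a := by
        apply Finset.sum_le_sum_of_subset_of_nonneg (Finset.coe_subset.mp h1)
        intro Q _ _
        have := qlen_pos Q
        positivity

lemma sizeSet_elem_le {r : ℝ} (hr : r ∈ sizeSet PP PP a j) :
    r ≤ Real.sqrt (M2 PP a) := by
  have hM := M2_nonneg PP a
  rcases hr with ⟨Q, hQ, rfl⟩ | ⟨T, h1, _, _, rfl⟩
  · rw [← Real.sqrt_eq_rpow]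
    apply Real.sqrt_le_sqrt
    apply Finset.single_le_sum (f := fun Q => Q.len⁻¹ * ‖a Q‖^2) _ hQ
    intro Q _
    have := qlen_pos Q
    positivity
  · rw [← Real.sqrt_eq_rpow]
    exact Real.sqrt_le_sqrt (tree_mass_le PP a h1)

lemma sizeSet_elem_nonneg {r : ℝ} (hr : r ∈ sizeSet PP PP a j) : 0 ≤ r := by
  rcases hr with ⟨Q, hQ, rfl⟩ | ⟨T, h1, _, _, rfl⟩
  · apply Real.rpow_nonneg
    have := qlen_pos Q
    positivity
  · apply Real.rpow_nonneg
    have := tile_len_pos (T.top.P 0)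
    have h2 : (0:ℝ) ≤ ∑ Q ∈ T.carrier, ‖a Q‖^2 :=
      Finset.sum_nonneg fun Q _ => by positivity
    positivity

lemma size_bdd : BddAbove (sizeSet PP PP a j) :=
  ⟨Real.sqrt (M2 PP a), fun r hr => sizeSet_elem_le PP a j hr⟩

lemma size_nonneg : 0 ≤ size PP PP a j :=
  Real.sSup_nonneg (fun r hr => sizeSet_elem_nonneg PP a j hr)

lemma inv_mul_sqrt {L c : ℝ} (hL : 0 < L) (hc : 0 ≤ c) :
    L⁻¹ * Real.sqrt (c * L) = (L⁻¹ * c) ^ ((1:ℝ)/2) := by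
  rw [← Real.sqrt_eq_rpow]
  rw [show L⁻¹ * c = (L⁻¹)^2 * (c * L) by field_simp]
  rw [Real.sqrt_mul (sq_nonneg _), Real.sqrt_sq (by positivity)]

/-- every element of `jnSet` is dominated by a corresponding element of `sizeSet` -/
lemma jn_le_size_elem {r : ℝ} (hr : r ∈ jnSet PP a j) :
    ∃ r' ∈ sizeSet PP PP a j, r ≤ r' := by
  rcases hr with ⟨Q, hQ, rfl⟩ | ⟨T, h1, h2, h3, rfl⟩
  · refine ⟨(Q.len⁻¹ * ‖a Q‖^2) ^ ((1:ℝ)/2), Or.inl ⟨Q, hQ, rfl⟩, ?_⟩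
    rw [single_fun_eq]
    have hL := qlen_pos Q
    have hw := wk_le a {Q} (S := Q.I) (vol_tile_I_ne_top _)
    rw [vol_qI_toReal, Finset.sum_singleton] at hw
    calc Q.len⁻¹ * weakNormOn Q.I (hfun a {Q})
        ≤ Q.len⁻¹ * Real.sqrt (‖a Q‖^2 * Q.len) := by
          apply mul_le_mul_of_nonneg_left hw (by positivity)
      _ = (Q.len⁻¹ * ‖a Q‖^2) ^ ((1:ℝ)/2) := inv_mul_sqrt hL (by positivity)
  · refine ⟨(T.top.len⁻¹ * ∑ Q ∈ T.carrier, ‖a Q‖^2) ^ ((1:ℝ)/2),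
      Or.inr ⟨T, h1, h2, h3, rfl⟩, ?_⟩
    rw [tree_fun_eq]
    have hL : (0:ℝ) < T.top.len := qlen_pos T.top
    have hw := wk_le a T.carrier (S := T.top.I) (vol_tile_I_ne_top _)
    rw [vol_qI_toReal] at hw
    calc T.top.len⁻¹ * weakNormOn T.top.I (hfun a T.carrier)
        ≤ T.top.len⁻¹ * Real.sqrt ((∑ Q ∈ T.carrier, ‖a Q‖^2) * T.top.len) := by
          apply mul_le_mul_of_nonneg_left hw (by positivity)
      _ = (T.top.len⁻¹ * ∑ Q ∈ T.carrier, ‖a Q‖^2) ^ ((1:ℝ)/2) :=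
          inv_mul_sqrt hL (Finset.sum_nonneg fun Q _ => by positivity)

lemma jn_elem_nonneg {r : ℝ} (hr : r ∈ jnSet PP a j) : 0 ≤ r := by
  rcases hr with ⟨Q, hQ, rfl⟩ | ⟨T, h1, h2, h3, rfl⟩
  · have := qlen_pos Q
    have := wk_nonneg Q.I (fun x => (‖a Q‖^2 * Set.indicator Q.I (1 : ℝ → ℝ) x / Q.len) ^ ((1:ℝ)/2))
    positivity
  · have := qlen_pos T.top
    have := wk_nonneg T.top.I (fun x => (∑ Q ∈ T.carrier,
      ‖a Q‖^2 * Set.indicator Q.I (1 : ℝ → ℝ) x / Q.len) ^ ((1:ℝ)/2))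
    positivity

lemma jn_bdd : BddAbove (jnSet PP a j) := by
  refine ⟨Real.sqrt (M2 PP a), fun r hr => ?_⟩
  obtain ⟨r', hr', hle⟩ := jn_le_size_elem PP a j hr
  exact hle.trans (sizeSet_elem_le PP a j hr')

lemma jn_sup_nonneg : 0 ≤ sSup (jnSet PP a j) :=
  Real.sSup_nonneg (fun r hr => jn_elem_nonneg PP a j hr)

/-- easy direction -/
lemma dir2 : sSup (jnSet PP a j) ≤ size PP PP a j := by
  apply Real.sSup_le _ (size_nonneg PP a j)
  intro r hr
  obtain ⟨r', hr', hle⟩ := jn_le_size_elem PP a j hr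
  exact hle.trans (le_csSup (size_bdd PP a j) hr')

/-- singles are dominated by twice the weak-norm supremum -/
lemma single_le_two_beta {Q : Quadtile} (hQ : Q ∈ PP) :
    (Q.len⁻¹ * ‖a Q‖^2) ^ ((1:ℝ)/2) ≤ 2 * sSup (jnSet PP a j) := by
  set β := sSup (jnSet PP a j) with hβ
  have hβ0 : 0 ≤ β := jn_sup_nonneg PP a j
  set c := (Q.len⁻¹ * ‖a Q‖^2) ^ ((1:ℝ)/2) with hc
  have hc0 : 0 ≤ c := by
    apply Real.rpow_nonneg
    have := qlen_pos Q
    positivity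
  rcases eq_or_lt_of_le hc0 with h0 | h0
  · rw [← h0]; positivity
  -- c > 0
  have hL := qlen_pos Q
  have hval : ∀ x ∈ Q.I, hfun a {Q} x = c := by
    intro x hx
    unfold hfun gfun
    rw [Finset.sum_singleton, Set.indicator_of_mem hx, Pi.one_apply, mul_one, hc]
    congr 1
    field_simp
  have hset : {x ∈ Q.I | c/2 < |hfun a {Q} x|} = Q.I := by
    ext x
    constructor
    · exact fun hx => hx.1
    · intro hx
      refine ⟨hx, ?_⟩
      rw [hval x hx, abs_of_pos h0]
      linarith
  have hW := wk_ge a ({Q}) (S := Q.I) (vol_tile_I_ne_top _) (lam := c/2) (by linarith)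
  rw [hset, vol_qI_toReal] at hW
  have hmem := jn_single_mem PP a j hQ
  have hle : Q.len⁻¹ * weakNormOn Q.I (hfun a {Q}) ≤ β := le_csSup (jn_bdd PP a j) hmem
  have : c/2 * Q.len * Q.len⁻¹ ≤ β := by
    calc c/2 * Q.len * Q.len⁻¹ ≤ weakNormOn Q.I (hfun a {Q}) * Q.len⁻¹ := by
          apply mul_le_mul_of_nonneg_right hW (by positivity)
      _ = Q.len⁻¹ * weakNormOn Q.I (hfun a {Q}) := by ring
      _ ≤ β := hle
  have hsimp : c/2 * Q.len * Q.len⁻¹ = c/2 := by field_simp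
  rw [hsimp] at this
  linarith

end
end JN8


namespace JN8

open MeasureTheory Set

noncomputable section

lemma ctr_eq (P : Tile) : ctr P = P.ωa + (2:ℝ)^(-P.k)/2 := by
  have := ωb_sub_ωa P
  unfold ctr
  linarith

lemma dil5_endpoints {t P : Tile} (h : t.dilω 5 ⊆ P.dilω 5) :
    ctr P - 5*(2:ℝ)^(-P.k)/2 < ctr t ∧ ctr t < ctr P + 5*(2:ℝ)^(-P.k)/2 := by
  have hmem := h (ctr_mem_dil5 t)
  rw [dil_eq] at hmem
  exact ⟨by linarith [hmem.1], by linarith [hmem.2]⟩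

/-- the class (bucket) of a tile `P` relative to top tile `t` at scale `kJ` -/
def clsOf (t : Tile) (kJ : ℤ) (P : Tile) : ℤ :=
  ⌈2 * (max (ctr P - 5*((2:ℝ)^(-P.k) - (2:ℝ)^(-kJ))/2) (ctr t - 7*(2:ℝ)^(-kJ)/2)
      - ctr t) / (2:ℝ)^(-kJ)⌉

lemma cls_mem {t P : Tile} {kJ : ℤ} (h : t.dilω 5 ⊆ P.dilω 5)
    (hscale : 2 * (2:ℝ)^(-kJ) ≤ (2:ℝ)^(-P.k)) :
    clsOf t kJ P ∈ Finset.Icc (-7 : ℤ) 5 ∧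
    ∀ c' : ℝ, ctr t + (clsOf t kJ P) * (2:ℝ)^(-kJ)/2 ≤ c' →
      c' ≤ ctr t + ((clsOf t kJ P : ℝ) + 1) * (2:ℝ)^(-kJ)/2 →
      ctr P - 5*((2:ℝ)^(-P.k) - (2:ℝ)^(-kJ))/2 ≤ c' ∧
        c' ≤ ctr P + 5*((2:ℝ)^(-P.k) - (2:ℝ)^(-kJ))/2 := by
  obtain ⟨he1, he2⟩ := dil5_endpoints h
  have hℓ0 : (0:ℝ) < 2^(-kJ) := two_zpow_pos _
  have hcls : clsOf t kJ P =
      ⌈2 * (max (ctr P - 5*((2:ℝ)^(-P.k) - (2:ℝ)^(-kJ))/2) (ctr t - 7*(2:ℝ)^(-kJ)/2)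
        - ctr t) / (2:ℝ)^(-kJ)⌉ := rfl
  have hx1 : ctr P - 5*((2:ℝ)^(-P.k) - (2:ℝ)^(-kJ))/2
      ≤ max (ctr P - 5*((2:ℝ)^(-P.k) - (2:ℝ)^(-kJ))/2) (ctr t - 7*(2:ℝ)^(-kJ)/2) :=
    le_max_left _ _
  have hx3 : ctr t - 7*(2:ℝ)^(-kJ)/2
      ≤ max (ctr P - 5*((2:ℝ)^(-P.k) - (2:ℝ)^(-kJ))/2) (ctr t - 7*(2:ℝ)^(-kJ)/2) :=
    le_max_right _ _
  have hx2 : max (ctr P - 5*((2:ℝ)^(-P.k) - (2:ℝ)^(-kJ))/2) (ctr t - 7*(2:ℝ)^(-kJ)/2)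
      ≤ ctr P + 5*((2:ℝ)^(-P.k) - (2:ℝ)^(-kJ))/2 - (2:ℝ)^(-kJ) :=
    max_le (by nlinarith) (by nlinarith)
  have hx4 : max (ctr P - 5*((2:ℝ)^(-P.k) - (2:ℝ)^(-kJ))/2) (ctr t - 7*(2:ℝ)^(-kJ)/2)
      ≤ ctr t + 5*(2:ℝ)^(-kJ)/2 :=
    max_le (by nlinarith) (by nlinarith)
  generalize hX : max (ctr P - 5*((2:ℝ)^(-P.k) - (2:ℝ)^(-kJ))/2)
      (ctr t - 7*(2:ℝ)^(-kJ)/2) = X at hx1 hx2 hx3 hx4 hcls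
  have hle1 : 2 * (X - ctr t) / (2:ℝ)^(-kJ) ≤ (clsOf t kJ P : ℝ) := by
    rw [hcls]; exact Int.le_ceil _
  have hle2 : (clsOf t kJ P : ℝ) < 2 * (X - ctr t) / (2:ℝ)^(-kJ) + 1 := by
    rw [hcls]; exact Int.ceil_lt_add_one _
  have hA : 2 * (X - ctr t) ≤ (clsOf t kJ P : ℝ) * (2:ℝ)^(-kJ) :=
    (div_le_iff₀ hℓ0).mp hle1
  have hB : ((clsOf t kJ P : ℝ) - 1) * (2:ℝ)^(-kJ) < 2 * (X - ctr t) := by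
    have h1 : (clsOf t kJ P : ℝ) - 1 < 2 * (X - ctr t) / (2:ℝ)^(-kJ) := by linarith
    exact (lt_div_iff₀ hℓ0).mp h1
  constructor
  · rw [Finset.mem_Icc]
    constructor
    · have hv : (-7:ℝ) ≤ 2 * (X - ctr t) / (2:ℝ)^(-kJ) := by
        rw [le_div_iff₀ hℓ0]; nlinarith
      have : (-7:ℝ) ≤ (clsOf t kJ P : ℝ) := le_trans hv hle1
      exact_mod_cast this
    · have hv : 2 * (X - ctr t) / (2:ℝ)^(-kJ) ≤ 5 := by
        rw [div_le_iff₀ hℓ0]; nlinarith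
      have h6 : (clsOf t kJ P : ℝ) < 6 := by linarith
      have : clsOf t kJ P < 6 := by exact_mod_cast h6
      omega
  · intro c' hcl hcu
    constructor
    · nlinarith
    · nlinarith

lemma neg_one_zpow_cases (k : ℤ) : (-1:ℝ)^(-k) = 1 ∨ (-1:ℝ)^(-k) = -1 := by
  rcases Int.even_or_odd (-k) with h | h
  · left; exact h.neg_one_zpow
  · right; exact h.neg_one_zpow

/-- existence of a tile with prescribed time interval and shifted-dyadic frequency
position `2^{-k} n/3` -/
lemma exists_tile (k mI n : ℤ) :
    ∃ t : Tile, t.k = k ∧ t.m = mI ∧ t.ωa = (2:ℝ)^(-k) * (n/3) := by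
  have hsign : (-1:ℝ)^(-k) = 1 ∨ (-1:ℝ)^(-k) = -1 := neg_one_zpow_cases k
  have hr : n % 3 = 0 ∨ n % 3 = 1 ∨ n % 3 = 2 := by omega
  rcases hsign with hε | hε
  · rcases hr with h | h | h
    · obtain ⟨q, hq⟩ : ∃ q, n = 3*q := ⟨n/3, by omega⟩
      refine ⟨⟨k, mI, q, 0, Or.inl rfl⟩, rfl, rfl, ?_⟩
      show (2:ℝ)^(-k) * ((q:ℝ) + (-1:ℝ)^(-k) * 0) = (2:ℝ)^(-k) * (n/3)
      rw [hε]; congr 1; rw [hq]; push_cast; ring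
    · obtain ⟨q, hq⟩ : ∃ q, n = 3*q + 1 := ⟨n/3, by omega⟩
      refine ⟨⟨k, mI, q, 1/3, Or.inr (Or.inl rfl)⟩, rfl, rfl, ?_⟩
      show (2:ℝ)^(-k) * ((q:ℝ) + (-1:ℝ)^(-k) * (1/3)) = (2:ℝ)^(-k) * (n/3)
      rw [hε]; congr 1; rw [hq]; push_cast; ring
    · obtain ⟨q, hq⟩ : ∃ q, n = 3*q + 2 := ⟨n/3, by omega⟩
      refine ⟨⟨k, mI, q, 2/3, Or.inr (Or.inr rfl)⟩, rfl, rfl, ?_⟩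
      show (2:ℝ)^(-k) * ((q:ℝ) + (-1:ℝ)^(-k) * (2/3)) = (2:ℝ)^(-k) * (n/3)
      rw [hε]; congr 1; rw [hq]; push_cast; ring
  · rcases hr with h | h | h
    · obtain ⟨q, hq⟩ : ∃ q, n = 3*q := ⟨n/3, by omega⟩
      refine ⟨⟨k, mI, q, 0, Or.inl rfl⟩, rfl, rfl, ?_⟩
      show (2:ℝ)^(-k) * ((q:ℝ) + (-1:ℝ)^(-k) * 0) = (2:ℝ)^(-k) * (n/3)
      rw [hε]; congr 1; rw [hq]; push_cast; ring
    · obtain ⟨q, hq⟩ : ∃ q, n = 3*q + 1 := ⟨n/3, by omega⟩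
      refine ⟨⟨k, mI, q+1, 2/3, Or.inr (Or.inr rfl)⟩, rfl, rfl, ?_⟩
      show (2:ℝ)^(-k) * (((q+1:ℤ):ℝ) + (-1:ℝ)^(-k) * (2/3)) = (2:ℝ)^(-k) * (n/3)
      rw [hε]; congr 1; rw [hq]; push_cast; ring
    · obtain ⟨q, hq⟩ : ∃ q, n = 3*q + 2 := ⟨n/3, by omega⟩
      refine ⟨⟨k, mI, q+1, 1/3, Or.inr (Or.inl rfl)⟩, rfl, rfl, ?_⟩
      show (2:ℝ)^(-k) * (((q+1:ℤ):ℝ) + (-1:ℝ)^(-k) * (1/3)) = (2:ℝ)^(-k) * (n/3)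
      rw [hε]; congr 1; rw [hq]; push_cast; ring

/-- a top tile for each class: time interval `Dy kJ mJ`, frequency center in the
class window -/
lemma exists_top (t : Tile) (kJ mJ mcl : ℤ) :
    ∃ t' : Tile, t'.k = kJ ∧ t'.m = mJ ∧
      ctr t + (mcl : ℝ) * (2:ℝ)^(-kJ)/2 ≤ ctr t' ∧
      ctr t' ≤ ctr t + ((mcl : ℝ) + 1) * (2:ℝ)^(-kJ)/2 := by
  set ℓ := (2:ℝ)^(-kJ) with hℓ
  have hℓ0 : 0 < ℓ := two_zpow_pos _
  set uL := ctr t + (mcl : ℝ) * ℓ/2 with huL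
  set n : ℤ := ⌈3*(uL - ℓ/2)/ℓ⌉ with hn
  obtain ⟨t', hk', hm', hωa⟩ := exists_tile kJ mJ n
  refine ⟨t', hk', hm', ?_, ?_⟩
  · rw [ctr_eq, hk', hωa]
    have h1 : 3*(uL - ℓ/2)/ℓ ≤ (n:ℝ) := Int.le_ceil _
    rw [div_le_iff₀ hℓ0] at h1
    rw [← hℓ]
    nlinarith
  · rw [ctr_eq, hk', hωa]
    have h2 : (n:ℝ) < 3*(uL - ℓ/2)/ℓ + 1 := Int.ceil_lt_add_one _
    have h2' : (n:ℝ) * ℓ < 3*(uL - ℓ/2) + ℓ := by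
      rw [show (3*(uL - ℓ/2)/ℓ + 1) = (3*(uL-ℓ/2) + ℓ)/ℓ by field_simp] at h2
      rw [← lt_div_iff₀ hℓ0]
      exact h2
    rw [← hℓ]
    nlinarith

lemma exists_top' (t : Tile) (kJ mJ mcl : ℤ) :
    ∃ t' : Tile, t'.k = kJ ∧ t'.m = mJ ∧
      ∀ P : Tile, t.dilω 5 ⊆ P.dilω 5 → 2 * (2:ℝ)^(-kJ) ≤ (2:ℝ)^(-P.k) →
        clsOf t kJ P = mcl → t'.dilω 5 ⊆ P.dilω 5 := by
  obtain ⟨t', hk', hm', hc1, hc2⟩ := exists_top t kJ mJ mcl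
  refine ⟨t', hk', hm', ?_⟩
  intro P hP hsc hcls
  obtain ⟨-, hwin⟩ := cls_mem hP hsc
  rw [hcls] at hwin
  obtain ⟨hw1, hw2⟩ := hwin (ctr t') hc1 hc2
  rw [dil_eq, dil_eq, hk']
  apply Set.Ioo_subset_Ioo <;> linarith

/-! ### Counting tiles at a fixed scale -/

lemma two_zpow_mul (k : ℤ) : (2:ℝ)^k * (2:ℝ)^(-k) = 1 := by
  rw [← zpow_add₀ (by norm_num : (2:ℝ) ≠ 0)]
  simp

lemma nval_exists (P : Tile) : ∃ z : ℤ, P.ωa * (2:ℝ)^(P.k) * 3 = (z:ℝ) := by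
  have hmul : P.ωa * (2:ℝ)^(P.k) = (P.l : ℝ) + (-1:ℝ)^(-P.k) * P.σ := by
    unfold Tile.ωa
    rw [mul_comm, ← mul_assoc, two_zpow_mul, one_mul]
  rcases neg_one_zpow_cases P.k with hε | hε <;> rcases P.hσ with hσ | hσ | hσ
  · exact ⟨3*P.l, by rw [hmul, hε, hσ]; push_cast; ring⟩
  · exact ⟨3*P.l + 1, by rw [hmul, hε, hσ]; push_cast; ring⟩
  · exact ⟨3*P.l + 2, by rw [hmul, hε, hσ]; push_cast; ring⟩
  · exact ⟨3*P.l, by rw [hmul, hε, hσ]; push_cast; ring⟩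
  · exact ⟨3*P.l - 1, by rw [hmul, hε, hσ]; push_cast; ring⟩
  · exact ⟨3*P.l - 2, by rw [hmul, hε, hσ]; push_cast; ring⟩

def nval (P : Tile) : ℤ := ⌈P.ωa * (2:ℝ)^(P.k) * 3⌉

lemma nval_eq (P : Tile) : (nval P : ℝ) = P.ωa * (2:ℝ)^(P.k) * 3 := by
  obtain ⟨z, hz⟩ := nval_exists P
  rw [nval, hz, Int.ceil_intCast]

lemma sigma_bounds (P : Tile) : 0 ≤ P.σ ∧ P.σ ≤ 2/3 := by
  rcases P.hσ with h | h | h <;> rw [h] <;> norm_num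

lemma tile_eq_of_nval {P P' : Tile} (hk : P.k = P'.k) (hm : P.m = P'.m)
    (hn : nval P = nval P') : P = P' := by
  have h1 : P.ωa * (2:ℝ)^(P.k) * 3 = P'.ωa * (2:ℝ)^(P'.k) * 3 := by
    rw [← nval_eq, ← nval_eq, hn]
  rw [← hk] at h1
  have h2 : P.ωa = P'.ωa := by
    have := two_zpow_pos P.k
    have h3 : P.ωa * (2:ℝ)^(P.k) = P'.ωa * (2:ℝ)^(P.k) := by linarith
    exact mul_right_cancel₀ (by positivity) h3
  -- from ωa equality derive (l,σ) equality
  have hmul : ∀ R : Tile, R.ωa * (2:ℝ)^(R.k) = (R.l : ℝ) + (-1:ℝ)^(-R.k) * R.σ := by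
    intro R
    unfold Tile.ωa
    rw [mul_comm, ← mul_assoc, two_zpow_mul, one_mul]
  have h4 : (P.l : ℝ) + (-1:ℝ)^(-P.k) * P.σ = (P'.l : ℝ) + (-1:ℝ)^(-P.k) * P'.σ := by
    have e1 := hmul P
    have e2 := hmul P'
    rw [← hk] at e2
    rw [← e1, ← e2, h2]
  have hεcases := neg_one_zpow_cases P.k
  obtain ⟨hs1, hs2⟩ := sigma_bounds P
  obtain ⟨hs1', hs2'⟩ := sigma_bounds P'
  have hll : P.l = P'.l := by
    rcases hεcases with hε | hε <;> rw [hε] at h4 <;>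
    · have h6 : (P.l:ℝ) - P'.l < 1 := by linarith
      have h7 : (-1:ℝ) < (P.l:ℝ) - P'.l := by linarith
      have hlt : P.l - P'.l < 1 := by exact_mod_cast h6
      have hgt : (-1:ℤ) < P.l - P'.l := by exact_mod_cast h7
      omega
  have hlr : (P.l : ℝ) = P'.l := by exact_mod_cast hll
  have hσσ : P.σ = P'.σ := by
    rcases hεcases with hε | hε <;> rw [hε] at h4 <;> linarith
  cases P; cases P'
  simp_all

lemma count16 {S : Finset Quadtile} (i : Fin 4) (t : Tile) (kJ : ℤ)
    (hdist : ∀ Q ∈ S, ∀ Q' ∈ S, Q ≠ Q' → Q.P i ≠ Q'.P i)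
    (hk : ∀ Q ∈ S, (Q.P i).k = kJ) (hm : ∀ Q ∈ S, ∀ Q' ∈ S, (Q.P i).m = (Q'.P i).m)
    (hfreq : ∀ Q ∈ S, ctr (Q.P i) - 5*(2:ℝ)^(-kJ)/2 < ctr t ∧
      ctr t < ctr (Q.P i) + 5*(2:ℝ)^(-kJ)/2) :
    S.card ≤ 16 := by
  set y : ℝ := 3 * ctr t * (2:ℝ)^kJ with hy
  have hmaps : ∀ Q ∈ S, nval (Q.P i) ∈ Finset.Icc (⌈y⌉ - 9) (⌈y⌉ + 5) := by
    intro Q hQ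
    set P := Q.P i with hP
    have hkP := hk Q hQ
    have hℓ0 : 0 < (2:ℝ)^(-kJ) := two_zpow_pos _
    have h2k : (2:ℝ)^kJ * (2:ℝ)^(-kJ) = 1 := two_zpow_mul kJ
    have h2k0 : 0 < (2:ℝ)^kJ := two_zpow_pos _
    obtain ⟨hf1, hf2⟩ := hfreq Q hQ
    have hctr : ctr P = P.ωa + (2:ℝ)^(-kJ)/2 := by rw [ctr_eq, hkP]
    have hnv : (nval P : ℝ) = P.ωa * (2:ℝ)^kJ * 3 := by rw [nval_eq, hkP]
    -- ωa ∈ (ctr t - 3ℓ, ctr t + 2ℓ)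
    have hω1 : ctr t - 3*(2:ℝ)^(-kJ) < P.ωa := by rw [hctr] at hf2; linarith
    have hω2 : P.ωa < ctr t + 2*(2:ℝ)^(-kJ) := by rw [hctr] at hf1; linarith
    have hn1 : y - 9 < (nval P : ℝ) := by
      rw [hnv, hy]
      nlinarith
    have hn2 : (nval P : ℝ) < y + 6 := by
      rw [hnv, hy]
      nlinarith
    rw [Finset.mem_Icc]
    constructor
    · have : y ≤ ((nval P + 9 : ℤ) : ℝ) := by push_cast; linarith
      have := Int.ceil_le.mpr this
      omega
    · have hc : y ≤ (⌈y⌉ : ℝ) := Int.le_ceil y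
      have : (nval P : ℝ) < ((⌈y⌉ + 6 : ℤ) : ℝ) := by push_cast; linarith
      have : nval P < ⌈y⌉ + 6 := by exact_mod_cast this
      omega
  have hinj : Set.InjOn (fun Q : Quadtile => nval (Q.P i)) (S : Set Quadtile) := by
    intro Q hQ Q' hQ' hnn
    by_contra hne
    have hPP : Q.P i ≠ Q'.P i := hdist Q hQ Q' hQ' hne
    apply hPP
    exact tile_eq_of_nval (by rw [hk Q hQ, hk Q' hQ']) (hm Q hQ Q' hQ') hnn
  calc S.card ≤ (Finset.Icc (⌈y⌉ - 9) (⌈y⌉ + 5)).card :=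
        Finset.card_le_card_of_injOn (fun Q : Quadtile => nval (Q.P i)) hmaps hinj
    _ ≤ 16 := by
        rw [Int.card_Icc]
        omega

end
end JN8


namespace JN8

open MeasureTheory Set

noncomputable section

lemma rpow_half_sq {u : ℝ} (hu : 0 ≤ u) : (u ^ ((1:ℝ)/2))^2 = u := by
  rw [← Real.rpow_natCast (u ^ ((1:ℝ)/2)) 2, ← Real.rpow_mul hu]
  norm_num

lemma rpow_half_le_sq {u v : ℝ} (hu : 0 ≤ u) (h : u ^ ((1:ℝ)/2) ≤ v) : u ≤ v^2 := by
  have h0 : 0 ≤ u ^ ((1:ℝ)/2) := Real.rpow_nonneg hu _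
  nlinarith [rpow_half_sq hu]

lemma vol_qI_ne_top (Q : Quadtile) : volume Q.I ≠ ⊤ := vol_tile_I_ne_top _

lemma qlen_eq_zpow (Q : Quadtile) : Q.len = (2:ℝ)^((Q.P 0).k) := rfl

set_option maxHeartbeats 4000000 in
/-- **Main tree estimate**: any admissible tree has size value at most
`105 * sSup (jnSet ...)`. -/
lemma tree_bound (PP : Finset Quadtile) (hR : Rank10 PP) (a : Quadtile → ℂ) (j : Fin 4) :
    ∀ n : ℕ, ∀ T : TTree, T.carrier.card ≤ n → ↑T.carrier ⊆ (PP : Set Quadtile) →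
      T.i ≠ j → GoodIndex PP T.i j →
      (T.top.len⁻¹ * ∑ Q ∈ T.carrier, ‖a Q‖^2) ^ ((1:ℝ)/2)
        ≤ 105 * sSup (jnSet PP a j) := by
  classical
  intro n
  induction n with
  | zero =>
    intro T hcard _ _ _
    have hc : T.carrier = ∅ := Finset.card_eq_zero.mp (Nat.le_zero.mp hcard)
    rw [hc, Finset.sum_empty, mul_zero, Real.zero_rpow (by norm_num)]
    have := jn_sup_nonneg PP a j
    linarith
  | succ n IH =>
    intro T hcard hsub hij hgood
    by_cases hcard' : T.carrier.card ≤ n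
    · exact IH T hcard' hsub hij hgood
    have hcardn : T.carrier.card = n + 1 := by omega
    set β := sSup (jnSet PP a j) with hβdef
    have hβ0 : 0 ≤ β := jn_sup_nonneg PP a j
    by_contra hcon
    push_neg at hcon   -- 105 β < s
    set L := T.top.len with hLdef
    have hL : 0 < L := qlen_pos T.top
    set Sig := ∑ Q ∈ T.carrier, ‖a Q‖^2 with hSigdef
    have hSig0 : 0 ≤ Sig := Finset.sum_nonneg fun Q _ => by positivity
    set s := (L⁻¹ * Sig) ^ ((1:ℝ)/2) with hsdef
    have hs0' : 0 ≤ s := Real.rpow_nonneg (by positivity) _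
    have hs0 : 0 < s := lt_of_le_of_lt (by positivity) hcon
    have hs2 : s^2 = L⁻¹ * Sig := rpow_half_sq (by positivity)
    have hSigeq : Sig = s^2 * L := by
      rw [hs2]; field_simp
    -- membership of Q in PP
    have hQPP : ∀ Q ∈ T.carrier, Q ∈ PP := by
      intro Q hQ
      exact Finset.mem_coe.mp (hsub (Finset.mem_coe.mpr hQ))
    -- the weak norm of the full tree
    set W := weakNormOn T.top.I (hfun a T.carrier) with hWdef
    have hWβ : T.top.len⁻¹ * W ≤ β :=
      le_csSup (jn_bdd PP a j) (jn_tree_mem PP a j hsub hij hgood)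
    have hWLβ : W ≤ L * β := by
      have h1 := mul_le_mul_of_nonneg_left hWβ hL.le
      have h2 : L * (T.top.len⁻¹ * W) = W := by
        rw [← hLdef]; field_simp
      rw [h2] at h1
      exact h1
    -- the exceptional set
    set E := {x ∈ T.top.I | s/2 < |hfun a T.carrier x|} with hEdef
    have hEmeas : MeasurableSet E := by
      have : E = T.top.I ∩ {x | s/2 < |hfun a T.carrier x|} := by
        ext x; simp [hEdef, Set.mem_sep_iff, Set.mem_inter_iff, Set.mem_setOf_eq]
      rw [this]
      exact (qI_meas T.top).inter
        (measurableSet_lt measurable_const (hfun_meas a T.carrier).abs)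
    have hEsub : E ⊆ T.top.I := fun x hx => hx.1
    have hEfin : volume E ≠ ⊤ :=
      ne_top_of_le_ne_top (vol_qI_ne_top T.top) (measure_mono hEsub)
    set tE := (volume E).toReal with htEdef
    have htE0 : 0 ≤ tE := ENNReal.toReal_nonneg
    have hEW : s/2 * tE ≤ W := wk_ge a T.carrier (vol_qI_ne_top T.top) (half_pos hs0)
    have hstE : s * tE ≤ 2 * (L * β) := by nlinarith
    have htE2L : tE ≤ 2*L/105 := by
      rcases eq_or_lt_of_le hβ0 with hb | hb
      · have h1 : s * tE ≤ 0 := by rw [← hb] at hstE; linarith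
        nlinarith
      · nlinarith
    -- pointwise bound off E
    have hoffE : ∀ x ∈ T.top.I \ E, gfun a T.carrier x ≤ s^2/4 := by
      intro x hx
      obtain ⟨hxI, hxE⟩ := hx
      have h1 : ¬ (s/2 < |hfun a T.carrier x|) := fun hlt => hxE ⟨hxI, hlt⟩
      push_neg at h1
      have h2 : hfun a T.carrier x ≤ s/2 := le_trans (le_abs_self _) h1
      have h3 := hfun_sq a T.carrier x
      nlinarith [hfun_nonneg a T.carrier x]
    -- integral bound off E
    have hAmeas : MeasurableSet (T.top.I \ E) := (qI_meas T.top).diff hEmeas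
    have hQIE : ∀ Q ∈ T.carrier, Q.I ∩ (T.top.I \ E) = Q.I \ E := by
      intro Q hQ; ext x
      constructor
      · rintro ⟨h1, -, h3⟩; exact ⟨h1, h3⟩
      · rintro ⟨h1, h2⟩; exact ⟨h1, carrier_I_sub T hQ h1, h2⟩
    have hvolQE : ∀ Q : Quadtile, volume (Q.I \ E) ≠ ⊤ := fun Q =>
      ne_top_of_le_ne_top (vol_qI_ne_top Q) (measure_mono Set.diff_subset)
    have key1 : ∑ Q ∈ T.carrier, (‖a Q‖^2 / Q.len) * (volume (Q.I \ E)).toReal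
        ≤ s^2/4 * L := by
      have hlin : ∫⁻ x in T.top.I \ E, Gfun a T.carrier x ∂volume
          ≤ ENNReal.ofReal (s^2/4) * volume (T.top.I \ E) := by
        calc ∫⁻ x in T.top.I \ E, Gfun a T.carrier x ∂volume
            ≤ ∫⁻ _ in T.top.I \ E, ENNReal.ofReal (s^2/4) ∂volume := by
              apply lintegral_mono_ae
              rw [ae_restrict_iff' hAmeas]
              apply Filter.Eventually.of_forall
              intro x hx
              rw [Gfun_eq]
              exact ENNReal.ofReal_le_ofReal (hoffE x hx)
          _ = ENNReal.ofReal (s^2/4) * volume (T.top.I \ E) := setLIntegral_const _ _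
      have h0 : ∫⁻ x in T.top.I \ E, Gfun a T.carrier x ∂volume
          = ∑ Q ∈ T.carrier, ENNReal.ofReal (‖a Q‖^2 / Q.len) * volume (Q.I \ E) := by
        rw [lint_G]
        exact Finset.sum_congr rfl (fun Q hQ => by rw [hQIE Q hQ])
      rw [h0] at hlin
      have hRHSfin : ENNReal.ofReal (s^2/4) * volume (T.top.I \ E) ≠ ⊤ :=
        ENNReal.mul_ne_top ENNReal.ofReal_ne_top
          (ne_top_of_le_ne_top (vol_qI_ne_top T.top) (measure_mono Set.diff_subset))
      have hmono := ENNReal.toReal_mono hRHSfin hlin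
      have hLHS : (∑ Q ∈ T.carrier, ENNReal.ofReal (‖a Q‖^2 / Q.len) * volume (Q.I \ E)).toReal
          = ∑ Q ∈ T.carrier, (‖a Q‖^2 / Q.len) * (volume (Q.I \ E)).toReal := by
        rw [ENNReal.toReal_sum (fun Q _ =>
          ENNReal.mul_ne_top ENNReal.ofReal_ne_top (hvolQE Q))]
        apply Finset.sum_congr rfl
        intro Q _
        rw [ENNReal.toReal_mul,
          ENNReal.toReal_ofReal (div_nonneg (by positivity) (qlen_pos Q).le)]
      have hRHS : (ENNReal.ofReal (s^2/4) * volume (T.top.I \ E)).toReal ≤ s^2/4 * L := by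
        rw [ENNReal.toReal_mul, ENNReal.toReal_ofReal (by positivity)]
        apply mul_le_mul_of_nonneg_left _ (by positivity)
        have h2 : volume (T.top.I \ E) ≤ volume T.top.I := measure_mono Set.diff_subset
        have h3 := ENNReal.toReal_mono (vol_qI_ne_top T.top) h2
        rw [vol_qI_toReal] at h3
        exact h3
      rw [hLHS] at hmono
      exact hmono.trans hRHS
    -- the bad set
    set Bad := T.carrier.filter (fun Q => Q.len / 2 < (volume (Q.I ∩ E)).toReal) with hBadDef
    have hBadsub : Bad ⊆ T.carrier := Finset.filter_subset _ _
    -- good part bound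
    have key2 : ∑ Q ∈ T.carrier \ Bad, ‖a Q‖^2 ≤ s^2/2 * L := by
      have hgoodQ : ∀ Q ∈ T.carrier \ Bad,
          ‖a Q‖^2 ≤ 2 * ((‖a Q‖^2 / Q.len) * (volume (Q.I \ E)).toReal) := by
        intro Q hQ
        obtain ⟨hQc, hQnb⟩ := Finset.mem_sdiff.mp hQ
        have hnb : ¬ (Q.len / 2 < (volume (Q.I ∩ E)).toReal) := fun h =>
          hQnb (Finset.mem_filter.mpr ⟨hQc, h⟩)
        push_neg at hnb
        have hfin1 : volume (Q.I ∩ E) ≠ ⊤ :=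
          ne_top_of_le_ne_top (vol_qI_ne_top Q) (measure_mono Set.inter_subset_left)
        have hadd : volume (Q.I ∩ E) + volume (Q.I \ E) = volume Q.I :=
          measure_inter_add_diff Q.I hEmeas
        have haddR : (volume (Q.I ∩ E)).toReal + (volume (Q.I \ E)).toReal = Q.len := by
          rw [← ENNReal.toReal_add hfin1 (hvolQE Q), hadd, vol_qI_toReal]
        have hlen := qlen_pos Q
        have hdiff : Q.len / 2 ≤ (volume (Q.I \ E)).toReal := by linarith
        have h2 : (‖a Q‖^2 / Q.len) * (Q.len/2)
            ≤ (‖a Q‖^2/Q.len) * (volume (Q.I \ E)).toReal :=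
          mul_le_mul_of_nonneg_left hdiff (by positivity)
        have h3 : (‖a Q‖^2 / Q.len) * (Q.len/2) = ‖a Q‖^2/2 := by
          field_simp
        linarith
      calc ∑ Q ∈ T.carrier \ Bad, ‖a Q‖^2
          ≤ ∑ Q ∈ T.carrier \ Bad, 2*((‖a Q‖^2 / Q.len) * (volume (Q.I \ E)).toReal) :=
            Finset.sum_le_sum hgoodQ
        _ = 2 * ∑ Q ∈ T.carrier \ Bad, (‖a Q‖^2 / Q.len) * (volume (Q.I \ E)).toReal := by
            rw [Finset.mul_sum]
        _ ≤ 2 * ∑ Q ∈ T.carrier, (‖a Q‖^2 / Q.len) * (volume (Q.I \ E)).toReal := by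
            apply mul_le_mul_of_nonneg_left _ (by norm_num)
            apply Finset.sum_le_sum_of_subset_of_nonneg Finset.sdiff_subset
            intro Q _ _
            exact mul_nonneg (div_nonneg (by positivity) (qlen_pos Q).le)
              ENNReal.toReal_nonneg
        _ ≤ 2 * (s^2/4 * L) := by linarith [key1]
        _ = s^2/2 * L := by ring
    -- maximal bad quadtiles
    set MaxBad := Bad.filter (fun Q => ∀ Q' ∈ Bad, Q.I ⊆ Q'.I → Q'.I ⊆ Q.I) with hMBdef
    have hmaxex : ∀ Q ∈ Bad, ∃ Qm ∈ MaxBad, Q.I ⊆ Qm.I := by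
      intro Q hQ
      have hne : (Bad.filter (fun Q' => Q.I ⊆ Q'.I)).Nonempty :=
        ⟨Q, Finset.mem_filter.mpr ⟨hQ, subset_rfl⟩⟩
      obtain ⟨Qm, hQm, hQmax⟩ := Finset.exists_max_image _ (fun Q' => Q'.len) hne
      obtain ⟨hQmBad, hQmsub⟩ := Finset.mem_filter.mp hQm
      refine ⟨Qm, Finset.mem_filter.mpr ⟨hQmBad, ?_⟩, hQmsub⟩
      intro Q'' hQ'' hsub''
      have hQ''B' : Q'' ∈ Bad.filter (fun Q' => Q.I ⊆ Q'.I) :=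
        Finset.mem_filter.mpr ⟨hQ'', hQmsub.trans hsub''⟩
      have hlen : Q''.len ≤ Qm.len := hQmax Q'' hQ''B'
      have h1 : Dy (Qm.P 0).k (Qm.P 0).m ⊆ Dy (Q''.P 0).k (Q''.P 0).m := hsub''
      have h2 : (2:ℝ)^((Q''.P 0).k) ≤ (2:ℝ)^((Qm.P 0).k) := hlen
      have heq : Qm.I = Q''.I := dy_eq_of_sub_len h1 h2
      rw [heq]
    -- the intervals of the maximal bad quadtiles
    set 𝒥 := MaxBad.image (fun Q => ((Q.P 0).k, (Q.P 0).m)) with h𝒥def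
    have hwitness : ∀ p ∈ 𝒥, ∃ Qm ∈ MaxBad, ((Qm.P 0).k, (Qm.P 0).m) = p := by
      intro p hp
      obtain ⟨Qm, hQm, hkp⟩ := Finset.mem_image.mp hp
      exact ⟨Qm, hQm, hkp⟩
    have hJdisj : ∀ p ∈ 𝒥, ∀ q ∈ 𝒥, p ≠ q → Dy p.1 p.2 ∩ Dy q.1 q.2 = ∅ := by
      intro p hp q hq hpq
      obtain ⟨Qp, hQp, hkp⟩ := hwitness p hp
      obtain ⟨Qq, hQq, hkq⟩ := hwitness q hq
      subst hkp; subst hkq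
      by_contra hne
      have hne' : (Dy (Qp.P 0).k (Qp.P 0).m ∩ Dy (Qq.P 0).k (Qq.P 0).m).Nonempty :=
        Set.nonempty_iff_ne_empty.mpr hne
      obtain ⟨hQpB, hQpmax⟩ := Finset.mem_filter.mp hQp
      obtain ⟨hQqB, hQqmax⟩ := Finset.mem_filter.mp hQq
      have hIeq : Qp.I = Qq.I := by
        rcases dy_comp hne' with hsub1 | hsub1
        · have hsub2 : Qp.I ⊆ Qq.I := hsub1
          exact Set.Subset.antisymm hsub2 (hQpmax Qq hQqB hsub2)
        · have hsub2 : Qq.I ⊆ Qp.I := hsub1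
          exact Set.Subset.antisymm (hQqmax Qp hQpB hsub2) hsub2
      apply hpq
      have hIeq' : Dy (Qp.P 0).k (Qp.P 0).m = Dy (Qq.P 0).k (Qq.P 0).m := hIeq
      have := dy_inj hIeq'
      rw [this.1, this.2]
    -- covering of Bad by maximal intervals
    set BadJ := fun p : ℤ × ℤ => Bad.filter (fun Q => Q.I ⊆ Dy p.1 p.2) with hBadJdef
    have hcover : Bad ⊆ 𝒥.biUnion BadJ := by
      intro Q hQ
      obtain ⟨Qm, hQm, hsubm⟩ := hmaxex Q hQ
      apply Finset.mem_biUnion.mpr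
      exact ⟨((Qm.P 0).k, (Qm.P 0).m), Finset.mem_image_of_mem _ hQm,
        Finset.mem_filter.mpr ⟨hQ, hsubm⟩⟩
    have hpairdisj : Set.PairwiseDisjoint ↑𝒥 BadJ := by
      intro p hp q hq hpq
      apply Finset.disjoint_left.mpr
      intro Q hQp hQq
      obtain ⟨-, h1⟩ := Finset.mem_filter.mp hQp
      obtain ⟨-, h2⟩ := Finset.mem_filter.mp hQq
      obtain ⟨x, hx⟩ := qI_nonempty Q
      have hmem : x ∈ Dy p.1 p.2 ∩ Dy q.1 q.2 := ⟨h1 hx, h2 hx⟩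
      rw [hJdisj p (Finset.mem_coe.mp hp) q (Finset.mem_coe.mp hq) hpq] at hmem
      exact hmem
    have hbadsum : ∑ Q ∈ Bad, ‖a Q‖^2 ≤ ∑ p ∈ 𝒥, ∑ Q ∈ BadJ p, ‖a Q‖^2 := by
      calc ∑ Q ∈ Bad, ‖a Q‖^2 ≤ ∑ Q ∈ 𝒥.biUnion BadJ, ‖a Q‖^2 :=
            Finset.sum_le_sum_of_subset_of_nonneg hcover (fun Q _ _ => by positivity)
        _ = ∑ p ∈ 𝒥, ∑ Q ∈ BadJ p, ‖a Q‖^2 := Finset.sum_biUnion hpairdisj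
    -- the per-interval estimate
    have key3 : ∀ p ∈ 𝒥, ∑ Q ∈ BadJ p, ‖a Q‖^2
        ≤ (64 + 13 * 105^2) * (β^2 * (2:ℝ)^p.1) := by
      intro p hp
      obtain ⟨Qm, hQmMax, hkp⟩ := hwitness p hp
      subst hkp
      obtain ⟨hQmBad, hQmmax⟩ := Finset.mem_filter.mp hQmMax
      have hQmcar : Qm ∈ T.carrier := hBadsub hQmBad
      have hQmPP : Qm ∈ PP := hQPP Qm hQmcar
      set kJ := (Qm.P 0).k with hkJdef
      show ∑ Q ∈ BadJ ((Qm.P 0).k, (Qm.P 0).m), ‖a Q‖^2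
        ≤ (64 + 13 * 105^2) * (β^2 * (2:ℝ)^kJ)
      have hQmlen : Qm.len = (2:ℝ)^kJ := rfl
      have hQmBad' : Qm.len / 2 < (volume (Qm.I ∩ E)).toReal :=
        (Finset.mem_filter.mp hQmBad).2
      have hJneI : Qm.I ≠ T.top.I := by
        intro heq
        have h1 : volume (Qm.I ∩ E) ≤ volume E := measure_mono Set.inter_subset_right
        have h2 : (volume (Qm.I ∩ E)).toReal ≤ tE := ENNReal.toReal_mono hEfin h1
        have h3 : Qm.len = L := by rw [← vol_qI_toReal, heq, vol_qI_toReal]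
        rw [h3] at hQmBad'
        nlinarith
      set t := T.top.P T.i with htdef
      have htI : t.I = T.top.I := qI T.top T.i
      have hfreq_all : ∀ Q ∈ BadJ ((Qm.P 0).k, (Qm.P 0).m),
          t.dilω 5 ⊆ (Q.P T.i).dilω 5 ∧ Q.I ⊆ Qm.I := by
        intro Q hQ
        obtain ⟨hQBad, hQsub⟩ := Finset.mem_filter.mp hQ
        have hQsub' : Q.I ⊆ Qm.I := hQsub
        have hQcar : Q ∈ T.carrier := hBadsub hQBad
        have hne : Q.P T.i ≠ t := by
          intro heq
          have h1 : (Q.P T.i).I = Q.I := qI Q T.i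
          have h2 : Q.I = T.top.I := by rw [← h1, heq, htI]
          apply hJneI
          apply Set.Subset.antisymm (carrier_I_sub T hQmcar)
          rw [← h2]; exact hQsub'
        rcases T.hle Q hQcar with hlt | heq
        · exact ⟨hlt.2, hQsub'⟩
        · exact absurd heq hne
      set BJ := BadJ ((Qm.P 0).k, (Qm.P 0).m) with hBJdef
      have hBJcar : ∀ Q ∈ BJ, Q ∈ T.carrier := fun Q hQ =>
        hBadsub (Finset.mem_filter.mp hQ).1
      set EqJ := BJ.filter (fun Q => Q.I = Qm.I) with hEqJdef
      set StJ := BJ.filter (fun Q => ¬ Q.I = Qm.I) with hStJdef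
      have hsplit : ∑ Q ∈ EqJ, ‖a Q‖^2 + ∑ Q ∈ StJ, ‖a Q‖^2 = ∑ Q ∈ BJ, ‖a Q‖^2 :=
        Finset.sum_filter_add_sum_filter_not BJ _ _
      have hEqJcar : ∀ Q ∈ EqJ, Q ∈ T.carrier := fun Q hQ =>
        hBJcar Q (Finset.mem_filter.mp hQ).1
      have hEqJ_k : ∀ Q ∈ EqJ, (Q.P T.i).k = kJ ∧ (Q.P T.i).m = (Qm.P 0).m := by
        intro Q hQ
        obtain ⟨hQBJ, hQeq⟩ := Finset.mem_filter.mp hQ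
        have h1 : Dy (Q.P T.i).k (Q.P T.i).m = Dy kJ (Qm.P 0).m := by
          calc Dy (Q.P T.i).k (Q.P T.i).m = (Q.P T.i).I := rfl
            _ = Q.I := qI Q T.i
            _ = Qm.I := hQeq
            _ = Dy kJ (Qm.P 0).m := rfl
        exact dy_inj h1
      have hEqJcard : EqJ.card ≤ 16 := by
        apply count16 T.i t kJ
        · intro Q hQ Q' hQ' hne
          exact ((hR Q (hQPP Q (hEqJcar Q hQ)) Q' (hQPP Q' (hEqJcar Q' hQ'))).1 hne)
            T.i T.hi
        · exact fun Q hQ => (hEqJ_k Q hQ).1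
        · intro Q hQ Q' hQ'
          rw [(hEqJ_k Q hQ).2, (hEqJ_k Q' hQ').2]
        · intro Q hQ
          have h5 := dil5_endpoints (hfreq_all Q (Finset.mem_filter.mp hQ).1).1
          rw [(hEqJ_k Q hQ).1] at h5
          exact h5
      have hEqJ_each : ∀ Q ∈ EqJ, ‖a Q‖^2 ≤ 4 * β^2 * (2:ℝ)^kJ := by
        intro Q hQ
        have hQPP' := hQPP Q (hEqJcar Q hQ)
        have hsingle := single_le_two_beta PP a j hQPP'
        rw [← hβdef] at hsingle
        have hQl := qlen_pos Q
        have hQlen : Q.len = (2:ℝ)^kJ := by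
          rw [← vol_qI_toReal Q, (Finset.mem_filter.mp hQ).2, vol_qI_toReal, hQmlen]
        have h1 : Q.len⁻¹ * ‖a Q‖^2 ≤ (2*β)^2 :=
          rpow_half_le_sq (by positivity) hsingle
        have h2 : ‖a Q‖^2 ≤ (2*β)^2 * Q.len := by
          have h3 := mul_le_mul_of_nonneg_left h1 hQl.le
          have h4 : Q.len * (Q.len⁻¹ * ‖a Q‖^2) = ‖a Q‖^2 := by field_simp
          rw [h4] at h3
          linarith
        rw [hQlen] at h2
        nlinarith [two_zpow_pos kJ]
      have hEqJ_sum : ∑ Q ∈ EqJ, ‖a Q‖^2 ≤ 64 * (β^2 * (2:ℝ)^kJ) := by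
        calc ∑ Q ∈ EqJ, ‖a Q‖^2 ≤ ∑ _Q ∈ EqJ, 4 * β^2 * (2:ℝ)^kJ :=
              Finset.sum_le_sum hEqJ_each
          _ = (EqJ.card : ℝ) * (4 * β^2 * (2:ℝ)^kJ) := by
              rw [Finset.sum_const, nsmul_eq_mul]
          _ ≤ 16 * (4 * β^2 * (2:ℝ)^kJ) := by
              apply mul_le_mul_of_nonneg_right _ (by positivity)
              exact_mod_cast hEqJcard
          _ = 64 * (β^2 * (2:ℝ)^kJ) := by ring
      -- strictly smaller part
      have hStJ_hyps : ∀ Q ∈ StJ, t.dilω 5 ⊆ (Q.P T.i).dilω 5 ∧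
          2 * (2:ℝ)^(-kJ) ≤ (2:ℝ)^(-(Q.P T.i).k) ∧ (Q.P T.i).I ⊂ Qm.I := by
        intro Q hQ
        obtain ⟨hQBJ, hQne⟩ := Finset.mem_filter.mp hQ
        obtain ⟨hdil, hsubm⟩ := hfreq_all Q hQBJ
        have hss : Q.I ⊂ Qm.I := ssubset_iff_subset_ne.mpr ⟨hsubm, hQne⟩
        have hss' : (Q.P T.i).I ⊂ Qm.I := by rw [qI Q T.i]; exact hss
        have hssD : Dy (Q.P T.i).k (Q.P T.i).m ⊂ Dy kJ (Qm.P 0).m := hss'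
        have hklt : (Q.P T.i).k < kJ := dy_k_lt_of_ssub hssD
        have hscale : 2 * (2:ℝ)^(-kJ) ≤ (2:ℝ)^(-(Q.P T.i).k) := by
          have h2 : (-kJ) + 1 ≤ -(Q.P T.i).k := by omega
          have h3 := (zpow_le_zpow_iff_right₀ (by norm_num : (1:ℝ) < 2)).mpr h2
          rw [zpow_add₀ (by norm_num : (2:ℝ) ≠ 0)] at h3
          calc 2 * (2:ℝ)^(-kJ) = (2:ℝ)^(-kJ) * (2:ℝ)^(1:ℤ) := by
                rw [zpow_one]; ring
            _ ≤ (2:ℝ)^(-(Q.P T.i).k) := h3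
        exact ⟨hdil, hscale, hss'⟩
      have hStJ_maps : ∀ Q ∈ StJ, clsOf t kJ (Q.P T.i) ∈ Finset.Icc (-7:ℤ) 5 := by
        intro Q hQ
        obtain ⟨hdil, hscale, -⟩ := hStJ_hyps Q hQ
        exact (cls_mem hdil hscale).1
      have hfib : ∑ mcl ∈ Finset.Icc (-7:ℤ) 5,
            ∑ Q ∈ StJ.filter (fun Q => clsOf t kJ (Q.P T.i) = mcl), ‖a Q‖^2
          = ∑ Q ∈ StJ, ‖a Q‖^2 := Finset.sum_fiberwise_of_maps_to hStJ_maps _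
      have hclsbound : ∀ mcl ∈ Finset.Icc (-7:ℤ) 5,
          ∑ Q ∈ StJ.filter (fun Q => clsOf t kJ (Q.P T.i) = mcl), ‖a Q‖^2
            ≤ 105^2 * (β^2 * (2:ℝ)^kJ) := by
        intro mcl _
        obtain ⟨t', hk', hm', htop⟩ := exists_top' t kJ (Qm.P 0).m mcl
        have hle' : ∀ Q ∈ StJ.filter (fun Q => clsOf t kJ (Q.P T.i) = mcl),
            Tile.Le (Q.P T.i) ((quadOf t').P T.i) := by
          intro Q hQf
          obtain ⟨hQSt, hQcls⟩ := Finset.mem_filter.mp hQf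
          obtain ⟨hdil, hscale, hss⟩ := hStJ_hyps Q hQSt
          left
          constructor
          · show (Q.P T.i).I ⊂ t'.I
            have ht'I : t'.I = Qm.I := by
              show Dy t'.k t'.m = Dy (Qm.P 0).k (Qm.P 0).m
              rw [hk', hm']
            rw [ht'I]
            exact hss
          · exact htop (Q.P T.i) hdil hscale hQcls
        set T' : TTree := ⟨T.i, T.hi, quadOf t',
          StJ.filter (fun Q => clsOf t kJ (Q.P T.i) = mcl), hle'⟩ with hT'def
        have hsubcar : T'.carrier ⊆ T.carrier := by
          intro Q hQ
          exact hBJcar Q (Finset.mem_filter.mp (Finset.mem_filter.mp hQ).1).1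
        have hQmnot : Qm ∉ T'.carrier := by
          intro hmem
          exact (Finset.mem_filter.mp (Finset.mem_filter.mp hmem).1).2 rfl
        have hcardle : T'.carrier.card ≤ n := by
          have hss2 : T'.carrier ⊂ T.carrier :=
            (Finset.ssubset_iff_of_subset hsubcar).mpr ⟨Qm, hQmcar, hQmnot⟩
          have := Finset.card_lt_card hss2
          omega
        have hsubPP : ↑T'.carrier ⊆ (PP : Set Quadtile) := by
          intro Q hQ
          exact hsub (Finset.mem_coe.mpr (hsubcar (Finset.mem_coe.mp hQ)))
        have hIH := IH T' hcardle hsubPP hij hgood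
        have hlen' : T'.top.len = (2:ℝ)^kJ := by
          show (2:ℝ)^t'.k = _
          rw [hk']
        have hsum0 : (0:ℝ) ≤ ∑ Q ∈ T'.carrier, ‖a Q‖^2 :=
          Finset.sum_nonneg fun Q _ => by positivity
        have hstep : T'.top.len⁻¹ * ∑ Q ∈ T'.carrier, ‖a Q‖^2 ≤ (105*β)^2 := by
          apply rpow_half_le_sq _ hIH
          have := qlen_pos T'.top
          positivity
        rw [hlen'] at hstep
        have hpos' : (0:ℝ) < (2:ℝ)^kJ := two_zpow_pos kJ
        have hsum' : ∑ Q ∈ T'.carrier, ‖a Q‖^2 ≤ (105*β)^2 * (2:ℝ)^kJ := by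
          have h3 := mul_le_mul_of_nonneg_left hstep hpos'.le
          have h4 : (2:ℝ)^kJ * (((2:ℝ)^kJ)⁻¹ * ∑ Q ∈ T'.carrier, ‖a Q‖^2)
              = ∑ Q ∈ T'.carrier, ‖a Q‖^2 := by
            field_simp
          rw [h4] at h3
          linarith
        have hring : (105*β)^2 * (2:ℝ)^kJ = 105^2 * (β^2 * (2:ℝ)^kJ) := by ring
        rw [hring] at hsum'
        exact hsum'
      have hStJ_sum : ∑ Q ∈ StJ, ‖a Q‖^2 ≤ 13 * (105^2 * (β^2 * (2:ℝ)^kJ)) := by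
        rw [← hfib]
        calc ∑ mcl ∈ Finset.Icc (-7:ℤ) 5,
              ∑ Q ∈ StJ.filter (fun Q => clsOf t kJ (Q.P T.i) = mcl), ‖a Q‖^2
            ≤ ∑ _mcl ∈ Finset.Icc (-7:ℤ) 5, 105^2 * (β^2 * (2:ℝ)^kJ) :=
              Finset.sum_le_sum hclsbound
          _ = ((Finset.Icc (-7:ℤ) 5).card : ℝ) * (105^2 * (β^2 * (2:ℝ)^kJ)) := by
              rw [Finset.sum_const, nsmul_eq_mul]
          _ = 13 * (105^2 * (β^2 * (2:ℝ)^kJ)) := by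
              have h13 : (Finset.Icc (-7:ℤ) 5).card = 13 := by decide
              rw [h13]
              norm_num
      calc ∑ Q ∈ BJ, ‖a Q‖^2 = ∑ Q ∈ EqJ, ‖a Q‖^2 + ∑ Q ∈ StJ, ‖a Q‖^2 := hsplit.symm
        _ ≤ 64 * (β^2 * (2:ℝ)^kJ) + 13 * (105^2 * (β^2 * (2:ℝ)^kJ)) :=
            add_le_add hEqJ_sum hStJ_sum
        _ = (64 + 13 * 105^2) * (β^2 * (2:ℝ)^kJ) := by ring
    -- total length of maximal intervals
    have key4 : ∑ p ∈ 𝒥, (2:ℝ)^p.1 ≤ 2 * tE := by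
      have hper : ∀ p ∈ 𝒥, (2:ℝ)^p.1 ≤ 2 * (volume (Dy p.1 p.2 ∩ E)).toReal := by
        intro p hp
        obtain ⟨Qm, hQmMax, hkp⟩ := hwitness p hp
        subst hkp
        have hQmBad : Qm ∈ Bad := (Finset.mem_filter.mp hQmMax).1
        have h1 : Qm.len / 2 < (volume (Qm.I ∩ E)).toReal :=
          (Finset.mem_filter.mp hQmBad).2
        show (2:ℝ)^((Qm.P 0).k) ≤ 2 * (volume (Dy (Qm.P 0).k (Qm.P 0).m ∩ E)).toReal
        have h2 : Qm.len = (2:ℝ)^((Qm.P 0).k) := rfl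
        have h3 : Qm.I = Dy (Qm.P 0).k (Qm.P 0).m := rfl
        rw [h2, h3] at h1
        linarith
      have hdisjmeas : ∑ p ∈ 𝒥, volume (Dy p.1 p.2 ∩ E)
          = volume (⋃ p ∈ 𝒥, Dy p.1 p.2 ∩ E) := by
        rw [measure_biUnion_finset]
        · intro p hp q hq hpq
          apply Set.disjoint_left.mpr
          intro x hxp hxq
          have hmem : x ∈ Dy p.1 p.2 ∩ Dy q.1 q.2 := ⟨hxp.1, hxq.1⟩
          rw [hJdisj p (Finset.mem_coe.mp hp) q (Finset.mem_coe.mp hq) hpq] at hmem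
          exact hmem
        · intro p _
          exact (dy_meas p.1 p.2).inter hEmeas
      have hvolsum : ∑ p ∈ 𝒥, (volume (Dy p.1 p.2 ∩ E)).toReal ≤ tE := by
        have hfinp : ∀ p ∈ 𝒥, volume (Dy p.1 p.2 ∩ E) ≠ ⊤ := fun p _ =>
          ne_top_of_le_ne_top hEfin (measure_mono Set.inter_subset_right)
        rw [← ENNReal.toReal_sum hfinp, hdisjmeas]
        apply ENNReal.toReal_mono hEfin
        exact measure_mono (Set.iUnion₂_subset fun p _ => Set.inter_subset_right)
      calc ∑ p ∈ 𝒥, (2:ℝ)^p.1 ≤ ∑ p ∈ 𝒥, 2 * (volume (Dy p.1 p.2 ∩ E)).toReal :=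
            Finset.sum_le_sum hper
        _ = 2 * ∑ p ∈ 𝒥, (volume (Dy p.1 p.2 ∩ E)).toReal := by rw [Finset.mul_sum]
        _ ≤ 2 * tE := by linarith [hvolsum]
    -- final assembly and contradiction
    have hfinal1 : ∑ Q ∈ Bad, ‖a Q‖^2 ≤ (64 + 13 * 105^2) * (β^2 * (2 * tE)) := by
      calc ∑ Q ∈ Bad, ‖a Q‖^2 ≤ ∑ p ∈ 𝒥, ∑ Q ∈ BadJ p, ‖a Q‖^2 := hbadsum
        _ ≤ ∑ p ∈ 𝒥, (64 + 13 * 105^2) * (β^2 * (2:ℝ)^p.1) := Finset.sum_le_sum key3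
        _ = (64 + 13 * 105^2) * β^2 * ∑ p ∈ 𝒥, (2:ℝ)^p.1 := by
            rw [Finset.mul_sum]
            apply Finset.sum_congr rfl
            intro p _
            ring
        _ ≤ (64 + 13 * 105^2) * β^2 * (2 * tE) := by
            apply mul_le_mul_of_nonneg_left key4 (by positivity)
        _ = (64 + 13 * 105^2) * (β^2 * (2 * tE)) := by ring
    have htotal : Sig = ∑ Q ∈ T.carrier \ Bad, ‖a Q‖^2 + ∑ Q ∈ Bad, ‖a Q‖^2 := by
      rw [hSigdef]
      exact (Finset.sum_sdiff hBadsub).symm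
    have hineq1 : s^2 * L ≤ s^2/2 * L + 286778 * (β^2 * tE) := by
      have h1 : s^2 * L = Sig := hSigeq.symm
      rw [h1, htotal]
      have h2 : (64 + 13 * 105^2 : ℝ) * (β^2 * (2*tE)) = 286778 * (β^2 * tE) := by
        ring
      linarith [key2, hfinal1, h2]
    have hineq2 : s^3 * L ≤ s^3/2 * L + 286778 * β^2 * (s * tE) := by
      have h1 := mul_le_mul_of_nonneg_left hineq1 hs0.le
      nlinarith [h1]
    have hmul : 286778 * β^2 * (s*tE) ≤ 286778 * β^2 * (2*(L*β)) :=
      mul_le_mul_of_nonneg_left hstE (by positivity)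
    have hineq3 : s^3 ≤ 1147112 * β^3 := by
      have h9 : (s^3 - 1147112*β^3) * L ≤ 0 := by nlinarith [hineq2, hmul]
      nlinarith [h9, hL]
    have hineq4 : (105*β)^3 < s^3 := by
      have h1 : 0 ≤ 105*β := by positivity
      have h2 : (0:ℝ) < s^2 + s*(105*β) + (105*β)^2 := by
        nlinarith [pow_pos hs0 2, mul_nonneg hs0.le h1, sq_nonneg (105*β)]
      have h3 := mul_pos (sub_pos.mpr hcon) h2
      nlinarith [h3]
    have hexp : (105*β)^3 = 1157625 * β^3 := by ring
    have hβ3 : 0 ≤ β^3 := by positivity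
    nlinarith [hineq3, hineq4, hβ3, hexp]

end
end JN8


/-- **John–Nirenberg inequality for sizes.** For a finite rank-`(1,0)`
collection of quadtiles, `size_j` is comparable, with absolute constants, to the
corresponding `L^{1,∞}`-based quantity. -/
theorem stmt_8 :
    ∃ C₁ C₂ : ℝ, 0 < C₁ ∧ 0 < C₂ ∧
      ∀ PP : Finset Quadtile, Rank10 PP →
        ∀ (j : Fin 4) (a : Quadtile → ℂ),
          size PP PP a j ≤ C₁ * sSup (jnSet PP a j) ∧
          sSup (jnSet PP a j) ≤ C₂ * size PP PP a j := by
  refine ⟨105, 1, by norm_num, by norm_num, ?_⟩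
  intro PP hR j a
  constructor
  · show sSup (sizeSet PP PP a j) ≤ 105 * sSup (jnSet PP a j)
    have hβ0 := JN8.jn_sup_nonneg PP a j
    apply Real.sSup_le _ (mul_nonneg (by norm_num) hβ0)
    intro r hr
    rcases hr with ⟨Q, hQ, rfl⟩ | ⟨T, h1, h2, h3, rfl⟩
    · have := JN8.single_le_two_beta PP a j hQ
      linarith
    · exact JN8.tree_bound PP hR a j T.carrier.card T (le_refl _) h1 h2 h3
  · rw [one_mul]
    exact JN8.dir2 PP a j

end
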